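/- arXiv:2508.08388 — 4 statements merged into one kernel-verified Lean document; each statement's English description precedes it below -/
import Mathlib

section
/- Let (W,S) be a Coxeter system, w ∈ FC(W), and s,t ∈ S with 3 ≤ m_{s,t}. If w is left star reducible by s with respect to t (i.e. s ∈ D_L(w) and t ∈ D_L(sw)), then ℓ(tw) > ℓ(w). -/
open CoxeterSystem

namespace CoxFC


open CoxeterSystem


variable {B : Type*} {W : Type*} [Group W] {M : CoxeterMatrix B}

/-- One commutation move: swap two adjacent commuting letters. -/
def CommStep (M : CoxeterMatrix B) (l l' : List B) : Prop :=
  ∃ (l₁ l₂ : List B) (a b : B), M a b = 2 ∧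
    l = l₁ ++ a :: b :: l₂ ∧ l' = l₁ ++ b :: a :: l₂

/-- Two words are commutation equivalent if related by a sequence of commutation moves. -/
def CommEquiv (M : CoxeterMatrix B) : List B → List B → Prop :=
  Relation.ReflTransGen (CommStep M)

/-- A fully commutative element: any two reduced expressions are commutation equivalent. -/
def IsFC (cs : CoxeterSystem M W) (w : W) : Prop :=
  ∀ l l' : List B, cs.IsReduced l → cs.IsReduced l' →
    cs.wordProd l = w → cs.wordProd l' = w → CommEquiv M l l'

/-- `m s t ≥ 3`, where a matrix entry `0` denotes `∞`. -/
def Big (M : CoxeterMatrix B) (s t : B) : Prop := 3 ≤ M s t ∨ M s t = 0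

/-- `w` is left star reducible by `s` with respect to `t`. -/
def IsLeftStarReducible (cs : CoxeterSystem M W) (s t : B) (w : W) : Prop :=
  Big M s t ∧ cs.IsLeftDescent w s ∧ cs.IsLeftDescent (cs.simple s * w) t

/-- `w` is right star reducible by `s` with respect to `t`. -/
def IsRightStarReducible (cs : CoxeterSystem M W) (s t : B) (w : W) : Prop :=
  Big M s t ∧ cs.IsRightDescent w s ∧ cs.IsRightDescent (w * cs.simple s) t

/-- A single left star reduction step from `w` to `v`. -/
def LeftStarStep (cs : CoxeterSystem M W) (w v : W) : Prop :=
  ∃ s t : B, IsLeftStarReducible cs s t w ∧ v = cs.simple s * w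

/-- A single (left or right) star reduction step from `w` to `v`. -/
def StarStep (cs : CoxeterSystem M W) (w v : W) : Prop :=
  ∃ s t : B, (IsLeftStarReducible cs s t w ∧ v = cs.simple s * w) ∨
    (IsRightStarReducible cs s t w ∧ v = w * cs.simple s)

/-- `w` admits no left star reduction. -/
def LeftStarIrreducible (cs : CoxeterSystem M W) (w : W) : Prop :=
  ∀ s t : B, ¬ IsLeftStarReducible cs s t w

/-- `w` admits no star reduction at all. -/
def StarIrreducible (cs : CoxeterSystem M W) (w : W) : Prop :=
  ∀ s t : B, ¬ IsLeftStarReducible cs s t w ∧ ¬ IsRightStarReducible cs s t w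

/-- A product of pairwise commuting generators (including the identity). -/
def IsCC (cs : CoxeterSystem M W) (w : W) : Prop :=
  ∃ l : List B, cs.IsReduced l ∧ cs.wordProd l = w ∧
    ∀ a ∈ l, ∀ b ∈ l, a ≠ b → M a b = 2

/-- The support of `w`: generators appearing in some reduced expression. -/
def Supp (cs : CoxeterSystem M W) (w : W) : Set B :=
  {a | ∃ l : List B, cs.IsReduced l ∧ cs.wordProd l = w ∧ a ∈ l}

/-- `us` is the Cartier–Foata normal form of `w`, presented as a list of words,
each a product of pairwise commuting generators. -/
def IsCFNF (cs : CoxeterSystem M W) (w : W) (us : List (List B)) : Prop :=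
  (∀ l ∈ us, l ≠ []) ∧
  cs.wordProd us.flatten = w ∧
  cs.IsReduced us.flatten ∧
  (∀ l ∈ us, ∀ a ∈ l, ∀ b ∈ l, a ≠ b → M a b = 2) ∧
  (∀ a : B, (∃ l ∈ us.head?, a ∈ l) ↔ cs.IsLeftDescent w a) ∧
  (∀ j : ℕ, j + 1 < us.length → ∀ t ∈ us.getD (j+1) [],
      ∃ s ∈ us.getD j [], Big M s t)



open Classical in
theorem filter_commStep {s t : B} (hst : M s t ≠ 2) (hts : M t s ≠ 2)
    {l l' : List B} (h : CommStep M l l') :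
    l.filter (fun x => decide (x = s ∨ x = t)) = l'.filter (fun x => decide (x = s ∨ x = t)) := by
  obtain ⟨l₁, l₂, a, b, hab, rfl, rfl⟩ := h
  have hns : ¬ ((a = s ∨ a = t) ∧ (b = s ∨ b = t)) := by
    rintro ⟨(rfl|rfl), (rfl|rfl)⟩
    · rw [M.diagonal] at hab; omega
    · exact hst hab
    · exact hts hab
    · rw [M.diagonal] at hab; omega
  simp only [List.filter_append, List.filter_cons]
  by_cases ha : a = s ∨ a = t <;> by_cases hb : b = s ∨ b = t <;>
    simp [ha, hb] at * <;> tauto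

open Classical in
theorem filter_commEquiv {s t : B} (hst : M s t ≠ 2) (hts : M t s ≠ 2)
    {l l' : List B} (h : CommEquiv M l l') :
    l.filter (fun x => decide (x = s ∨ x = t)) = l'.filter (fun x => decide (x = s ∨ x = t)) := by
  induction h with
  | refl => rfl
  | tail _ hstep ih => exact ih.trans (filter_commStep hst hts hstep)

theorem stmt2 {B W : Type*} [Group W] {M : CoxeterMatrix B}
    (cs : CoxeterSystem M W) (w : W) (hw : IsFC cs w)
    (s t : B) (h : IsLeftStarReducible cs s t w) :
    cs.length w < cs.length (cs.simple t * w) := by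
  classical
  obtain ⟨hbig, hs, hst⟩ := h
  by_contra hle
  push_neg at hle
  have ht : cs.IsLeftDescent w t := by
    unfold CoxeterSystem.IsLeftDescent
    rcases cs.length_simple_mul w t with h1 | h1 <;> omega
  have hMst : M s t ≠ 2 := by rcases hbig with h3 | h0 <;> omega
  have hMts : M t s ≠ 2 := by rw [M.symmetric]; exact hMst
  have hne : s ≠ t := by
    rintro rfl
    rcases hbig with h3 | h0
    · rw [M.diagonal] at h3; omega
    · rw [M.diagonal] at h0; omega
  -- reduced word l1 = s :: t :: l₀ for w
  obtain ⟨l₀, hl₀len, hl₀⟩ := cs.exists_reduced_word (cs.simple t * (cs.simple s * w))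
  have hlen_sw : cs.length (cs.simple s * w) + 1 = cs.length w :=
    cs.isLeftDescent_iff.mp hs
  have hlen_tsw : cs.length (cs.simple t * (cs.simple s * w)) + 1
      = cs.length (cs.simple s * w) := cs.isLeftDescent_iff.mp hst
  have hprod1 : cs.wordProd (s :: t :: l₀) = w := by
    rw [wordProd_cons, wordProd_cons, ← hl₀]
    group
    simp [cs.simple_sq]
  have hred1 : cs.IsReduced (s :: t :: l₀) := by
    unfold CoxeterSystem.IsReduced
    rw [hprod1]
    simp only [List.length_cons, ← hl₀len.eq, ← hl₀]
    omega
  -- reduced word l2 = t :: l₀' for w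
  obtain ⟨l₀', hl₀'len, hl₀'⟩ := cs.exists_reduced_word (cs.simple t * w)
  have hlen_tw : cs.length (cs.simple t * w) + 1 = cs.length w :=
    cs.isLeftDescent_iff.mp ht
  have hprod2 : cs.wordProd (t :: l₀') = w := by
    rw [wordProd_cons, ← hl₀']
    group
    simp [cs.simple_sq]
  have hred2 : cs.IsReduced (t :: l₀') := by
    unfold CoxeterSystem.IsReduced
    rw [hprod2]
    simp only [List.length_cons, ← hl₀'len.eq, ← hl₀']
    omega
  have hce := hw _ _ hred1 hred2 hprod1 hprod2
  have := filter_commEquiv hMst hMts hce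
  simp only [List.filter_cons, decide_eq_true_eq, eq_self_iff_true, true_or, or_true,
    if_true] at this
  injection this with h _
  exact hne h



end CoxFC
end

section
/- Let (W,S) be a Coxeter system and w ∈ FC(W) with s ∈ D_L(w) and s′ ∈ D_L(w), s ≠ s′. Suppose w is left star reducible by s with respect to t and also left star reducible by s′ with respect to t′ (with m_{s,t} ≥ 3 and m_{s′,t′} ≥ 3). Then m_{x,x′} = 2 for every x ∈ {s,t} and x′ ∈ {s′,t′}. -/
open CoxeterSystem

namespace CoxFC


open CoxeterSystem


variable {B : Type*} {W : Type*} [Group W] {M : CoxeterMatrix B}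

section Aux

variable {B : Type*} {W : Type*} [Group W] {M : CoxeterMatrix B}

private lemma filter_eq_of_commStep (p : B → Bool)
    (hp : ∀ a b : B, M a b = 2 → p a = false ∨ p b = false)
    {l l' : List B} (h : CommStep M l l') : l.filter p = l'.filter p := by
  obtain ⟨l₁, l₂, a, b, hab, rfl, rfl⟩ := h
  rcases hp a b hab with h1 | h1 <;> cases hpa : p a <;> cases hpb : p b <;>
    simp_all [List.filter_append, List.filter_cons]

private lemma filter_eq_of_commEquiv (p : B → Bool)
    (hp : ∀ a b : B, M a b = 2 → p a = false ∨ p b = false)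
    {l l' : List B} (h : CommEquiv M l l') : l.filter p = l'.filter p := by
  induction h with
  | refl => rfl
  | tail _ hstep ih => exact ih.trans (filter_eq_of_commStep p hp hstep)

private lemma hp_of_pair {x y : B} (hM2 : M x y ≠ 2) (p : B → Bool)
    (hpc : ∀ c, p c = true ↔ c = x ∨ c = y) :
    ∀ a b : B, M a b = 2 → p a = false ∨ p b = false := by
  intro a b hab
  by_contra hcon
  push_neg at hcon
  obtain ⟨ha, hb⟩ := hcon
  rw [Bool.ne_false_iff] at ha hb
  rw [hpc] at ha hb
  have hab' : a ≠ b := by rintro rfl; rw [M.diagonal] at hab; omega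
  rcases ha with rfl | rfl <;> rcases hb with rfl | rfl
  · exact hab' rfl
  · exact hM2 hab
  · exact hM2 ((M.symmetric a b).symm ▸ hab)
  · exact hab' rfl

private lemma cons_reduced (cs : CoxeterSystem M W) {w : W} {i : B}
    (hd : cs.IsLeftDescent w i) {l : List B} (hr : cs.IsReduced l)
    (hl : cs.wordProd l = cs.simple i * w) :
    cs.IsReduced (i :: l) ∧ cs.wordProd (i :: l) = w := by
  have hw : cs.wordProd (i :: l) = w := by
    rw [cs.wordProd_cons, hl, cs.simple_mul_simple_cancel_left]
  refine ⟨?_, hw⟩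
  have h1 := (cs.isLeftDescent_iff).mp hd
  have h2 : cs.length w = l.length + 1 := by
    rw [← h1, ← hl, hr]
  unfold CoxeterSystem.IsReduced
  rw [hw, List.length_cons, h2]

private lemma exists_word₂ (cs : CoxeterSystem M W) {w : W} {a b : B}
    (h : IsLeftStarReducible cs a b w) :
    ∃ u, cs.IsReduced (a :: b :: u) ∧ cs.wordProd (a :: b :: u) = w := by
  obtain ⟨hbig, hda, hdb⟩ := h
  obtain ⟨u, hu, hpu⟩ := cs.exists_reduced_word' (cs.simple b * (cs.simple a * w))
  have h2 := cons_reduced cs hdb hu hpu.symm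
  have h1 := cons_reduced cs hda h2.1 h2.2
  exact ⟨u, h1.1, h1.2⟩

private lemma big_ne {x y : B} (h : Big M x y) : x ≠ y ∧ M x y ≠ 2 := by
  constructor
  · rintro rfl; rw [Big, M.diagonal] at h; omega
  · rintro h2; rw [Big, h2] at h; omega

private lemma hf_pos (p : B → Bool) (a : B) (l : List B) (h : p a = true) :
    ((a :: l).filter p).head? = some a := by
  rw [List.filter_cons_of_pos h, List.head?_cons]

private lemma hf_neg (p : B → Bool) (a : B) (l : List B) (h : p a = false) :
    ((a :: l).filter p).head? = (l.filter p).head? := by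
  rw [List.filter_cons_of_neg (by simp [h])]

end Aux


theorem stmt6 {B W : Type*} [Group W] {M : CoxeterMatrix B}
    (cs : CoxeterSystem M W) (w : W) (hw : IsFC cs w)
    (s t s' t' : B) (hss' : s ≠ s')
    (h1 : IsLeftStarReducible cs s t w)
    (h2 : IsLeftStarReducible cs s' t' w) :
    ∀ x ∈ ({s, t} : Set B), ∀ x' ∈ ({s', t'} : Set B), M x x' = 2 := by
  classical
  obtain ⟨u, hru, hpu⟩ := exists_word₂ cs h1
  obtain ⟨u', hru', hpu'⟩ := exists_word₂ cs h2
  have hce : CommEquiv M (s :: t :: u) (s' :: t' :: u') := hw _ _ hru hru' hpu hpu'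
  obtain ⟨hst_ne, hst2⟩ := big_ne h1.1
  obtain ⟨hs't'_ne, hs't'2⟩ := big_ne h2.1
  have key : ∀ x y : B, M x y ≠ 2 →
      ((s :: t :: u).filter (fun c => decide (c = x ∨ c = y))).head? =
      ((s' :: t' :: u').filter (fun c => decide (c = x ∨ c = y))).head? := by
    intro x y hxy2
    rw [filter_eq_of_commEquiv _ (hp_of_pair hxy2 _ (fun c => by simp)) hce]
  have hss'2 : M s s' = 2 := by
    by_contra hne
    have h := key s s' hne
    rw [hf_pos (fun c => decide (c = s ∨ c = s')) s (t :: u) (by simp),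
      hf_pos (fun c => decide (c = s ∨ c = s')) s' (t' :: u') (by simp)] at h
    exact hss' (Option.some.inj h)
  have hts' : t ≠ s' := by
    rintro rfl
    exact hst2 hss'2
  have hst' : s ≠ t' := by
    rintro rfl
    exact hs't'2 ((M.symmetric s' s).trans hss'2)
  have hts'2 : M t s' = 2 := by
    by_contra hne
    have h := key t s' hne
    rw [hf_neg (fun c => decide (c = t ∨ c = s')) s (t :: u) (by simp [hst_ne, hss']),
      hf_pos (fun c => decide (c = t ∨ c = s')) t u (by simp),
      hf_pos (fun c => decide (c = t ∨ c = s')) s' (t' :: u') (by simp)] at h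
    exact hts' (Option.some.inj h)
  have hst'2 : M s t' = 2 := by
    by_contra hne
    have h := key s t' hne
    rw [hf_pos (fun c => decide (c = s ∨ c = t')) s (t :: u) (by simp),
      hf_neg (fun c => decide (c = s ∨ c = t')) s' (t' :: u') (by simp [hss'.symm, hs't'_ne]),
      hf_pos (fun c => decide (c = s ∨ c = t')) t' u' (by simp)] at h
    exact hst' (Option.some.inj h)
  have htt' : t ≠ t' := by
    rintro rfl
    have h := key s t hst2
    rw [hf_pos (fun c => decide (c = s ∨ c = t)) s (t :: u) (by simp),
      hf_neg (fun c => decide (c = s ∨ c = t)) s' (t :: u') (by simp [hss'.symm, hts'.symm]),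
      hf_pos (fun c => decide (c = s ∨ c = t)) t u' (by simp)] at h
    exact hst_ne (Option.some.inj h)
  have htt'2 : M t t' = 2 := by
    by_contra hne
    have h := key t t' hne
    rw [hf_neg (fun c => decide (c = t ∨ c = t')) s (t :: u) (by simp [hst_ne, hst']),
      hf_pos (fun c => decide (c = t ∨ c = t')) t u (by simp),
      hf_neg (fun c => decide (c = t ∨ c = t')) s' (t' :: u') (by simp [hts'.symm, hs't'_ne]),
      hf_pos (fun c => decide (c = t ∨ c = t')) t' u' (by simp)] at h
    exact htt' (Option.some.inj h)
  intro x hx x' hx'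
  simp only [Set.mem_insert_iff, Set.mem_singleton_iff] at hx hx'
  rcases hx with rfl | rfl <;> rcases hx' with rfl | rfl
  · exact hss'2
  · exact hst'2
  · exact hts'2
  · exact htt'2


end CoxFC
end

section
/- Let (W,S) be a Coxeter system and w ∈ FC(W). If w is star reducible to star irreducible elements v and v′ via sequences of (left or right) star reductions of lengths l and k respectively, then k = l. Equivalently, ℓ(v) = ℓ(v′). -/
open CoxeterSystem

namespace CoxFC


open CoxeterSystem


variable {B : Type*} {W : Type*} [Group W] {M : CoxeterMatrix B}

section Exchange

variable (cs : CoxeterSystem M W)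

local prefix:100 "σ" => cs.simple
local prefix:100 "π" => cs.wordProd
local prefix:100 "ℓ" => cs.length

theorem conj_simple_iff (j : B) (x y : W) : σ j * x * σ j = y ↔ x = σ j * y * σ j := by
  constructor
  · intro h; rw [← h, ← mul_assoc, ← mul_assoc, cs.simple_mul_simple_self, one_mul,
      mul_assoc, cs.simple_mul_simple_self, mul_one]
  · intro h; rw [h, ← mul_assoc, ← mul_assoc, cs.simple_mul_simple_self, one_mul,
      mul_assoc, cs.simple_mul_simple_self, mul_one]

theorem zmod2_add_self (a : ZMod 2) : a + a = 0 := by revert a; decide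

open Classical in
/-- The sign-flipping function used to prove the exchange property. -/
noncomputable def etaFun (i : B) : W × ZMod 2 → W × ZMod 2 :=
  fun p => (σ i * p.1 * σ i, p.2 + (if p.1 = σ i then 1 else 0))

theorem etaFun_invol (i : B) : Function.Involutive (etaFun cs i) := by
  classical
  intro p
  have h1 : σ i * (σ i * p.1 * σ i) * σ i = p.1 := by
    rw [← mul_assoc, ← mul_assoc, cs.simple_mul_simple_self, one_mul, mul_assoc,
      cs.simple_mul_simple_self, mul_one]
  have h2 : (σ i * p.1 * σ i = σ i) ↔ (p.1 = σ i) := by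
    rw [conj_simple_iff, mul_assoc, cs.simple_mul_simple_self, mul_one]
  show (σ i * (σ i * p.1 * σ i) * σ i,
      (p.2 + (if p.1 = σ i then 1 else 0)) + (if σ i * p.1 * σ i = σ i then (1 : ZMod 2) else 0)) = p
  rw [h1, if_congr h2 rfl rfl, add_assoc]
  classical
  rcases em (p.1 = σ i) with h | h
  · simp only [h, if_pos]
    rw [zmod2_add_self, add_zero, ← h]
  · simp only [if_neg h, add_zero]

/-- The sign-flipping permutation. -/
noncomputable def etaPerm (i : B) : Equiv.Perm (W × ZMod 2) :=
  (etaFun_invol cs i).toPerm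

theorem etaPerm_apply (i : B) (p : W × ZMod 2) : etaPerm cs i p = etaFun cs i p := rfl

theorem etaPerm_liftable : M.IsLiftable (etaPerm cs) := by
  intro i j
  rcases Nat.eq_zero_or_pos (M i j) with h0 | hpos
  · rw [h0, pow_zero]
  set m := M i j with hm
  set μ := σ i * σ j with hmu
  set ν := σ j * σ i with hnu
  have hμν : μ * ν = 1 := by
    rw [hmu, hnu, mul_assoc, ← mul_assoc (σ j), cs.simple_mul_simple_self, one_mul,
      cs.simple_mul_simple_self]
  have hνμ : ν * μ = 1 := by
    rw [hmu, hnu, mul_assoc, ← mul_assoc (σ i), cs.simple_mul_simple_self, one_mul,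
      cs.simple_mul_simple_self]
  have hνinv : μ⁻¹ = ν := by rw [eq_comm, eq_inv_iff_mul_eq_one, hνμ]
  have hμinv : ν⁻¹ = μ := by rw [eq_comm, eq_inv_iff_mul_eq_one, hμν]
  have hμm : μ ^ m = 1 := cs.simple_mul_simple_pow i j
  have hνm : ν ^ m = 1 := by
    have := cs.simple_mul_simple_pow j i
    rwa [M.symmetric j i, ← hm, ← hnu] at this
  have hσjμ : σ j * μ = ν * σ j := by rw [hmu, hnu, ← mul_assoc]
  have hσjν : σ j * ν = μ * σ j := by
    rw [hmu, hnu, ← mul_assoc, cs.simple_mul_simple_self, one_mul, mul_assoc,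
      cs.simple_mul_simple_self, mul_one]
  classical
  set e := etaPerm cs i * etaPerm cs j with he
  have key : ∀ (K : ℕ) (p : W × ZMod 2),
      (e ^ K) p =
        (μ ^ K * p.1 * ν ^ K,
          p.2 + ∑ k ∈ Finset.range (2 * K), (if p.1 = ν ^ k * σ j then (1 : ZMod 2) else 0)) := by
    intro K
    induction K with
    | zero => intro p; simp
    | succ K ih =>
      intro p
      have hep : e p = (μ * p.1 * ν,
          p.2 + ((if p.1 = ν ^ 0 * σ j then (1 : ZMod 2) else 0)
            + (if p.1 = ν ^ 1 * σ j then (1 : ZMod 2) else 0))) := by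
        show etaFun cs i (etaFun cs j p) = _
        have c2 : (σ j * p.1 * σ j = σ i) ↔ (p.1 = ν ^ 1 * σ j) := by
          rw [conj_simple_iff, pow_one, hnu, mul_assoc]
        show (σ i * (σ j * p.1 * σ j) * σ i,
            (p.2 + (if p.1 = σ j then (1:ZMod 2) else 0))
              + (if σ j * p.1 * σ j = σ i then (1:ZMod 2) else 0)) = _
        rw [if_congr c2 rfl rfl, add_assoc]
        have : (p.1 = σ j) ↔ (p.1 = ν ^ 0 * σ j) := by rw [pow_zero, one_mul]
        rw [if_congr this rfl rfl]
        have : σ i * (σ j * p.1 * σ j) * σ i = μ * p.1 * ν := by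
          rw [hmu, hnu]; group
        rw [this]
      rw [pow_succ, Equiv.Perm.mul_apply, hep, ih]
      have reidx : ∀ k : ℕ, (μ * p.1 * ν = ν ^ k * σ j) ↔ (p.1 = ν ^ (k + 2) * σ j) := by
        intro k
        constructor
        · intro h
          have hp : p.1 = μ⁻¹ * (ν ^ k * σ j) * ν⁻¹ := by rw [← h]; group
          rw [hp, hνinv, hμinv]
          calc ν * (ν ^ k * σ j) * μ = ν * ν ^ k * (σ j * μ) := by group
            _ = ν * ν ^ k * (ν * σ j) := by rw [hσjμ]
            _ = ν ^ (k + 2) * σ j := by group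
        · intro h
          rw [h]
          calc μ * (ν ^ (k+2) * σ j) * ν
              = (μ * ν) * (ν ^ (k+1) * (σ j * ν)) := by group
            _ = (μ * ν) * (ν ^ (k+1) * (μ * σ j)) := by rw [hσjν]
            _ = ν ^ k * ((ν * μ) * σ j) := by rw [hμν]; group
            _ = ν ^ k * σ j := by rw [hνμ, one_mul]
      show (μ ^ K * (μ * p.1 * ν) * ν ^ K,
          (p.2 + _) + ∑ k ∈ Finset.range (2 * K),
            (if μ * p.1 * ν = ν ^ k * σ j then (1 : ZMod 2) else 0)) = _
      have hfst : μ ^ K * (μ * p.1 * ν) * ν ^ K = μ ^ (K+1) * p.1 * ν ^ (K+1) := by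
        rw [pow_succ, pow_succ']
        group
      have hsum : ∑ k ∈ Finset.range (2 * K),
          (if μ * p.1 * ν = ν ^ k * σ j then (1 : ZMod 2) else 0)
          = ∑ k ∈ Finset.range (2 * K), (if p.1 = ν ^ (k+2) * σ j then (1 : ZMod 2) else 0) :=
        Finset.sum_congr rfl (fun k _ => if_congr (reidx k) rfl rfl)
      rw [hfst, hsum]
      have expand : ∑ k ∈ Finset.range (2 * (K+1)),
          (if p.1 = ν ^ k * σ j then (1 : ZMod 2) else 0)
          = (∑ k ∈ Finset.range (2 * K), (if p.1 = ν ^ (k+2) * σ j then (1:ZMod 2) else 0)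
              + (if p.1 = ν ^ 1 * σ j then (1:ZMod 2) else 0))
            + (if p.1 = ν ^ 0 * σ j then (1:ZMod 2) else 0) := by
        rw [(by ring : 2 * (K + 1) = (2 * K + 1) + 1), Finset.sum_range_succ',
          Finset.sum_range_succ']
      rw [expand]
      simp only [Prod.mk.injEq]
      refine ⟨by trivial, by simp only [pow_one]; ring⟩
  apply Equiv.ext
  intro p
  rw [key m p, hμm, hνm]
  have hsum0 : ∑ k ∈ Finset.range (2 * m), (if p.1 = ν ^ k * σ j then (1 : ZMod 2) else 0) = 0 := by
    rw [two_mul, Finset.sum_range_add]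
    have heq : ∀ k, (if p.1 = ν ^ (m + k) * σ j then (1:ZMod 2) else 0)
        = (if p.1 = ν ^ k * σ j then (1:ZMod 2) else 0) := by
      intro k
      have : ν ^ (m + k) = ν ^ k := by rw [pow_add, hνm, one_mul]
      rw [this]
    simp only [heq]
    exact zmod2_add_self _
  rw [hsum0, add_zero, one_mul, mul_one]
  rfl

/-- The sign homomorphism. -/
noncomputable def etaHom : W →* Equiv.Perm (W × ZMod 2) :=
  cs.lift ⟨etaPerm cs, etaPerm_liftable cs⟩

theorem etaHom_simple (i : B) : etaHom cs (σ i) = etaPerm cs i :=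
  cs.lift_apply_simple (etaPerm_liftable cs) i

open Classical in
theorem etaHom_wordProd (ω : List B) (p : W × ZMod 2) :
    etaHom cs (π ω) p = (π ω * p.1 * (π ω)⁻¹,
      p.2 + ((cs.rightInvSeq ω).map (fun u => if p.1 = u then (1 : ZMod 2) else 0)).sum) := by
  induction ω generalizing p with
  | nil => simp [rightInvSeq]
  | cons i ω ih =>
    rw [cs.wordProd_cons, map_mul, Equiv.Perm.mul_apply, ih, etaHom_simple]
    show etaFun cs i _ = _
    have hc : (π ω * p.1 * (π ω)⁻¹ = σ i) ↔ (p.1 = (π ω)⁻¹ * σ i * π ω) := by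
      constructor
      · intro h
        have := congrArg (fun x => (π ω)⁻¹ * x * (π ω)) h
        simpa [mul_assoc] using this
      · intro h; rw [h]; group
    show (σ i * (π ω * p.1 * (π ω)⁻¹) * σ i,
        (p.2 + _) + (if π ω * p.1 * (π ω)⁻¹ = σ i then (1:ZMod 2) else 0)) = _
    rw [if_congr hc rfl rfl]
    have hfst : σ i * (π ω * p.1 * (π ω)⁻¹) * σ i = (σ i * π ω) * p.1 * (σ i * π ω)⁻¹ := by
      rw [mul_inv_rev, cs.inv_simple]; group
    rw [hfst]
    show _ = (_, p.2 + ((cs.rightInvSeq (i :: ω)).map _).sum)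
    have hris : cs.rightInvSeq (i :: ω) = ((π ω)⁻¹ * σ i * π ω) :: cs.rightInvSeq ω := rfl
    rw [hris]
    simp only [List.map_cons, List.sum_cons, Prod.mk.injEq]
    refine ⟨by trivial, by ring⟩

open Classical in
theorem ris_parity (ω₁ ω₂ : List B) (h : π ω₁ = π ω₂) (t : W) :
    ((cs.rightInvSeq ω₁).map (fun u => if t = u then (1 : ZMod 2) else 0)).sum
      = ((cs.rightInvSeq ω₂).map (fun u => if t = u then (1 : ZMod 2) else 0)).sum := by
  have h1 := etaHom_wordProd cs ω₁ (t, 0)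
  have h2 := etaHom_wordProd cs ω₂ (t, 0)
  rw [h] at h1
  rw [h1] at h2
  have := congrArg Prod.snd h2
  simpa using this

open Classical in
theorem mem_of_sum_ne_zero {t : W} {L : List W}
    (h : (L.map (fun u => if t = u then (1 : ZMod 2) else 0)).sum ≠ 0) : t ∈ L := by
  by_contra hmem
  apply h
  have : ∀ u ∈ L, (if t = u then (1 : ZMod 2) else 0) = 0 := by
    intro u hu
    rw [if_neg]
    rintro rfl
    exact hmem hu
  rw [List.sum_eq_zero]
  intro x hx
  rw [List.mem_map] at hx
  obtain ⟨u, hu, rfl⟩ := hx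
  exact this u hu

/-- The right exchange property. -/
theorem right_exchange {ω : List B} {i : B} (hred : cs.IsReduced ω)
    (hdesc : cs.IsRightDescent (π ω) i) :
    ∃ j < ω.length, π ω * σ i = π (ω.eraseIdx j) := by
  classical
  have hmem : σ i ∈ cs.rightInvSeq ω := by
    obtain ⟨η, hηred, hηw⟩ := cs.exists_reduced_word' (π ω * σ i)
    have hηw' : π (η.concat i) = π ω := by
      rw [cs.wordProd_concat, ← hηw, mul_assoc, cs.simple_mul_simple_self, mul_one]
    have hηlen : ℓ (π η) + 1 = ℓ (π ω) := by
      rw [← hηw]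
      exact (cs.isRightDescent_iff).mp hdesc
    have hnotmem : σ i ∉ cs.rightInvSeq η := by
      intro hmem
      have := (cs.isRightInversion_of_mem_rightInvSeq hηred hmem).2
      rw [← hηw] at this
      rw [mul_assoc, cs.simple_mul_simple_self, mul_one] at this
      have hlt : ℓ (π ω * σ i) < ℓ (π ω) := hdesc
      omega
    have hsum_eta : ((cs.rightInvSeq η).map
        (fun u => if σ i = u then (1 : ZMod 2) else 0)).sum = 0 := by
      rw [List.sum_eq_zero]
      intro x hx
      rw [List.mem_map] at hx
      obtain ⟨u, hu, rfl⟩ := hx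
      rw [if_neg]
      rintro rfl
      exact hnotmem hu
    have hconcat : cs.rightInvSeq (η.concat i)
        = (List.map (MulAut.conj (σ i)) (cs.rightInvSeq η)).concat (σ i) :=
      cs.rightInvSeq_concat η i
    have hsum_concat : ((cs.rightInvSeq (η.concat i)).map
        (fun u => if σ i = u then (1 : ZMod 2) else 0)).sum = 1 := by
      rw [hconcat]
      rw [List.concat_eq_append, List.map_append, List.sum_append]
      simp only [List.map_singleton, List.sum_cons, List.sum_nil, if_pos rfl, add_zero]
      have : ((List.map (MulAut.conj (σ i)) (cs.rightInvSeq η)).map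
          (fun u => if σ i = u then (1 : ZMod 2) else 0)).sum = 0 := by
        rw [List.map_map]
        rw [List.sum_eq_zero]
        intro x hx
        rw [List.mem_map] at hx
        obtain ⟨u, hu, rfl⟩ := hx
        simp only [Function.comp_apply]
        rw [if_neg]
        intro heq
        rw [MulAut.conj_apply] at heq
        have : u = σ i := by
          have h2 : σ i * u * (σ i)⁻¹ = σ i := heq.symm
          rw [cs.inv_simple] at h2
          rw [(conj_simple_iff cs i u (σ i)).mp h2, mul_assoc, cs.simple_mul_simple_self, mul_one]
        rw [this] at hu
        exact hnotmem hu
      rw [this, zero_add]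
      simp
    have := ris_parity cs ω (η.concat i) hηw'.symm (σ i)
    rw [hsum_concat] at this
    exact mem_of_sum_ne_zero (by rw [this]; exact one_ne_zero)
  obtain ⟨j, hj, hget⟩ := List.mem_iff_getElem.mp hmem
  rw [cs.length_rightInvSeq] at hj
  refine ⟨j, hj, ?_⟩
  rw [← cs.wordProd_mul_getD_rightInvSeq ω j]
  congr 1
  rw [← hget, List.getD_eq_getElem _ 1 (by rw [cs.length_rightInvSeq]; exact hj)]

-- ### Exchange corollaries

/-- A reduced word for an element with a given left descent. -/
theorem descent_word_L {u : W} {i : B} (h : cs.IsLeftDescent u i) :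
    ∃ l, cs.IsReduced l ∧ π l = σ i * u ∧ cs.IsReduced (i :: l) ∧ π (i :: l) = u := by
  obtain ⟨l, hlred, hlw⟩ := cs.exists_reduced_word' (σ i * u)
  refine ⟨l, hlred, hlw.symm, ?_, ?_⟩
  · show ℓ (π (i :: l)) = (i :: l).length
    rw [cs.wordProd_cons, ← hlw, simple_mul_simple_cancel_left]
    have h1 : ℓ (σ i * u) + 1 = ℓ u := (cs.isLeftDescent_iff).mp h
    have h2 : ℓ (π l) = l.length := hlred
    rw [← hlw] at h2
    simp only [List.length_cons]
    omega
  · rw [cs.wordProd_cons, ← hlw, simple_mul_simple_cancel_left]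

/-- A reduced word for an element with a given right descent. -/
theorem descent_word_R {u : W} {i : B} (h : cs.IsRightDescent u i) :
    ∃ l, cs.IsReduced l ∧ π l = u * σ i ∧ cs.IsReduced (l ++ [i]) ∧ π (l ++ [i]) = u := by
  obtain ⟨l, hlred, hlw⟩ := cs.exists_reduced_word' (u * σ i)
  refine ⟨l, hlred, hlw.symm, ?_, ?_⟩
  · show ℓ (π (l ++ [i])) = (l ++ [i]).length
    rw [cs.wordProd_append, cs.wordProd_singleton, ← hlw, simple_mul_simple_cancel_right]
    have h1 : ℓ (u * σ i) + 1 = ℓ u := (cs.isRightDescent_iff).mp h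
    have h2 : ℓ (π l) = l.length := hlred
    rw [← hlw] at h2
    simp only [List.length_append, List.length_singleton]
    omega
  · rw [cs.wordProd_append, cs.wordProd_singleton, ← hlw, simple_mul_simple_cancel_right]

theorem eraseIdx_append_singleton {l : List B} {a : B} {j : ℕ} (hj : j < l.length) :
    (l ++ [a]).eraseIdx j = l.eraseIdx j ++ [a] := by
  induction l generalizing j with
  | nil => simp at hj
  | cons x l ih =>
    cases j with
    | zero => simp
    | succ j =>
      simp only [List.cons_append, List.eraseIdx_cons_succ, List.cons.injEq, true_and]
      exact ih (by simpa using hj)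

/-- If `a ≠ b` (as reflections) are both right descents of `u`, then `a` remains a right
descent after removing `b`. -/
theorem descent_descent_R {u : W} {a b : B} (ha : cs.IsRightDescent u a)
    (hb : cs.IsRightDescent u b) (hne : σ a ≠ σ b) :
    cs.IsRightDescent (u * σ b) a := by
  obtain ⟨l, hlred, hlw, hcred, hcw⟩ := descent_word_R cs ha
  have hexch := right_exchange cs hcred (by rwa [hcw])
  rw [hcw] at hexch
  obtain ⟨j, hj, hje⟩ := hexch
  rw [List.length_append, List.length_singleton] at hj
  rcases Nat.lt_or_ge j l.length with hjl | hjl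
  · rw [eraseIdx_append_singleton hjl] at hje
    rw [cs.wordProd_append, cs.wordProd_singleton] at hje
    show ℓ (u * σ b * σ a) < ℓ (u * σ b)
    have h1 : u * σ b * σ a = π (l.eraseIdx j) := by
      rw [hje, mul_assoc, cs.simple_mul_simple_self, mul_one]
    have h2 : ℓ (u * σ b * σ a) ≤ (l.eraseIdx j).length := by
      rw [h1]; exact cs.length_wordProd_le _
    have h3 : (l.eraseIdx j).length + 1 = l.length := List.length_eraseIdx_add_one hjl
    have h4 : ℓ (π l) = l.length := hlred
    rw [hlw] at h4
    have h5 : ℓ (u * σ b) + 1 = ℓ u := (cs.isRightDescent_iff).mp hb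
    have h6 : ℓ (u * σ a) + 1 = ℓ u := (cs.isRightDescent_iff).mp ha
    omega
  · exfalso
    have hjeq : j = l.length := by omega
    rw [hjeq] at hje
    have : (l ++ [a]).eraseIdx l.length = l := by
      rw [List.eraseIdx_append_of_length_le (le_refl _)]
      simp
    rw [this, hlw] at hje
    apply hne
    have := mul_left_cancel hje
    exact this.symm ▸ rfl

theorem isLeftDescent_iff_inv (u : W) (i : B) :
    cs.IsLeftDescent u i ↔ cs.IsRightDescent u⁻¹ i := by
  rw [← cs.isLeftDescent_inv_iff, inv_inv]

theorem isRightDescent_iff_inv (u : W) (i : B) :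
    cs.IsRightDescent u i ↔ cs.IsLeftDescent u⁻¹ i := by
  rw [← cs.isRightDescent_inv_iff, inv_inv]

/-- Left version of `descent_descent_R`. -/
theorem descent_descent_L {u : W} {a b : B} (ha : cs.IsLeftDescent u a)
    (hb : cs.IsLeftDescent u b) (hne : σ a ≠ σ b) :
    cs.IsLeftDescent (σ b * u) a := by
  rw [isLeftDescent_iff_inv] at ha hb ⊢
  have : (σ b * u)⁻¹ = u⁻¹ * σ b := by rw [mul_inv_rev, cs.inv_simple]
  rw [this]
  exact descent_descent_R cs ha hb hne

/-- The key left-right dichotomy. -/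
theorem dichotomy_LR {x : W} {s r : B} (hs : cs.IsLeftDescent x s)
    (hr : cs.IsRightDescent x r) :
    σ s * x = x * σ r ∨
      (cs.IsRightDescent (σ s * x) r ∧ cs.IsLeftDescent (x * σ r) s) := by
  obtain ⟨l, hlred, hlw, hcred, hcw⟩ := descent_word_L cs hs
  have hexch := right_exchange cs hcred (by rwa [hcw])
  rw [hcw] at hexch
  obtain ⟨j, hj, hje⟩ := hexch
  cases j with
  | zero =>
    left
    rw [List.eraseIdx_cons_zero, hlw] at hje
    rw [← hje]
  | succ j =>
    right
    rw [List.eraseIdx_cons_succ, cs.wordProd_cons] at hje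
    have h1 : σ s * (x * σ r) = π (l.eraseIdx j) := by
      rw [hje, simple_mul_simple_cancel_left]
    have hjl : j < l.length := by
      simp only [List.length_cons] at hj
      omega
    have h2 : ℓ (σ s * (x * σ r)) ≤ (l.eraseIdx j).length := by
      rw [h1]; exact cs.length_wordProd_le _
    have h3 : (l.eraseIdx j).length + 1 = l.length := List.length_eraseIdx_add_one hjl
    have h4 : ℓ (π l) = l.length := hlred
    rw [hlw] at h4
    have h5 : ℓ (σ s * x) + 1 = ℓ x := (cs.isLeftDescent_iff).mp hs
    have h6 : ℓ (x * σ r) + 1 = ℓ x := (cs.isRightDescent_iff).mp hr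
    have hassoc : σ s * x * σ r = σ s * (x * σ r) := by rw [mul_assoc]
    constructor
    · show ℓ (σ s * x * σ r) < ℓ (σ s * x)
      rw [hassoc]; omega
    · show ℓ (σ s * (x * σ r)) < ℓ (x * σ r)
      omega

-- ### Commutation invariants

theorem commStep_perm {l l' : List B} (h : CommStep M l l') : l.Perm l' := by
  obtain ⟨l₁, l₂, a, b, _, rfl, rfl⟩ := h
  exact List.Perm.append_left l₁ (List.Perm.swap b a l₂)

theorem commEquiv_perm {l l' : List B} (h : CommEquiv M l l') : l.Perm l' := by
  induction h with
  | refl => exact List.Perm.refl _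
  | tail _ hstep ih => exact ih.trans (commStep_perm hstep)

theorem simple_comm {a b : B} (h : M a b = 2) : σ a * σ b = σ b * σ a := by
  have h1 : (σ a * σ b) ^ 2 = 1 := by
    have := cs.simple_mul_simple_pow a b
    rwa [h] at this
  have h2 : σ a * σ b = (σ a * σ b)⁻¹ := by
    rw [eq_inv_iff_mul_eq_one, ← pow_two, h1]
  rw [h2, mul_inv_rev, cs.inv_simple, cs.inv_simple]

theorem commStep_wordProd {l l' : List B} (h : CommStep M l l') : π l = π l' := by
  obtain ⟨l₁, l₂, a, b, hab, rfl, rfl⟩ := h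
  rw [cs.wordProd_append, cs.wordProd_append, cs.wordProd_cons, cs.wordProd_cons,
    cs.wordProd_cons, cs.wordProd_cons, ← mul_assoc, ← mul_assoc, ← mul_assoc, ← mul_assoc,
    mul_assoc (cs.wordProd l₁), simple_comm cs hab, ← mul_assoc]

theorem commStep_filter [DecidableEq B] {a b : B} (hab : M a b ≠ 2) {l l' : List B}
    (h : CommStep M l l') :
    l.filter (fun x => x = a || x = b) = l'.filter (fun x => x = a || x = b) := by
  obtain ⟨l₁, l₂, c, d, hcd, rfl, rfl⟩ := h
  rw [List.filter_append, List.filter_append]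
  congr 1
  rw [List.filter_cons, List.filter_cons, List.filter_cons, List.filter_cons]
  have hcdne : c ≠ d := by
    intro h; rw [h, M.diagonal] at hcd; omega
  by_cases hc : (c = a ∨ c = b) <;> by_cases hd : (d = a ∨ d = b)
  · exfalso
    rcases hc with rfl | rfl <;> rcases hd with rfl | rfl
    · exact hcdne rfl
    · exact hab hcd
    · apply hab; rw [M.symmetric]; exact hcd
    · exact hcdne rfl
  · have hc' : (decide (c = a) || decide (c = b)) = true := by
      rcases hc with rfl | rfl <;> simp
    have hd' : (decide (d = a) || decide (d = b)) = false := by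
      push_neg at hd
      simp [hd.1, hd.2]
    simp [hc', hd']
  · have hc' : (decide (c = a) || decide (c = b)) = false := by
      push_neg at hc
      simp [hc.1, hc.2]
    have hd' : (decide (d = a) || decide (d = b)) = true := by
      rcases hd with rfl | rfl <;> simp
    simp [hc', hd']
  · have hc' : (decide (c = a) || decide (c = b)) = false := by
      push_neg at hc
      simp [hc.1, hc.2]
    have hd' : (decide (d = a) || decide (d = b)) = false := by
      push_neg at hd
      simp [hd.1, hd.2]
    simp [hc', hd']

theorem commEquiv_filter [DecidableEq B] {a b : B} (hab : M a b ≠ 2) {l l' : List B}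
    (h : CommEquiv M l l') :
    l.filter (fun x => x = a || x = b) = l'.filter (fun x => x = a || x = b) := by
  induction h with
  | refl => rfl
  | tail _ hstep ih => exact ih.trans (commStep_filter hab hstep)

-- ### The embedding predicate

/-- `u` is obtained from `w` by stripping descents on the left and right. -/
def Emb (w u : W) : Prop :=
  ∃ p q : List B, w = π p * u * π q ∧ ℓ w = p.length + ℓ u + q.length

theorem emb_refl (w : W) : Emb cs w w :=
  ⟨[], [], by simp, by simp⟩

theorem emb_stepL {w u : W} {i : B} (h : Emb cs w u) (hi : cs.IsLeftDescent u i) :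
    Emb cs w (σ i * u) := by
  obtain ⟨p, q, hw, hl⟩ := h
  refine ⟨p ++ [i], q, ?_, ?_⟩
  · rw [cs.wordProd_append, cs.wordProd_singleton, hw, mul_assoc (π p) (σ i),
      simple_mul_simple_cancel_left]
  · have := (cs.isLeftDescent_iff).mp hi
    simp only [List.length_append, List.length_singleton]
    omega

theorem emb_stepR {w u : W} {i : B} (h : Emb cs w u) (hi : cs.IsRightDescent u i) :
    Emb cs w (u * σ i) := by
  obtain ⟨p, q, hw, hl⟩ := h
  refine ⟨p, i :: q, ?_, ?_⟩
  · rw [cs.wordProd_cons, hw, mul_assoc (π p) (u * σ i),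
      show (u * σ i) * (σ i * π q) = u * π q from by
        rw [mul_assoc u, ← mul_assoc (σ i), cs.simple_mul_simple_self, one_mul],
      ← mul_assoc]
  · have := (cs.isRightDescent_iff).mp hi
    simp only [List.length_cons]
    omega

theorem emb_word {w u : W} (h : Emb cs w u) :
    ∃ p q : List B, (∀ l : List B, cs.IsReduced l → π l = u →
      (cs.IsReduced (p ++ l ++ q) ∧ π (p ++ l ++ q) = w)) := by
  obtain ⟨p, q, hw, hl⟩ := h
  refine ⟨p, q, fun l hred hlu => ?_⟩
  have hprod : π (p ++ l ++ q) = w := by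
    rw [cs.wordProd_append, cs.wordProd_append, hlu, hw]
  constructor
  · show ℓ (π (p ++ l ++ q)) = (p ++ l ++ q).length
    rw [hprod]
    have : l.length = ℓ u := by rw [← hlu]; exact hred.symm
    simp only [List.length_append]
    omega
  · exact hprod

/-- Counts of letters in reduced words of FC-embedded elements are well defined. -/
theorem fc_count [DecidableEq B] {w u : W} (hw : IsFC cs w) (h : Emb cs w u)
    {l l' : List B} (hred : cs.IsReduced l) (hred' : cs.IsReduced l')
    (hl : π l = u) (hl' : π l' = u) (c : B) : l.count c = l'.count c := by
  obtain ⟨p, q, hpq⟩ := emb_word cs h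
  obtain ⟨h1, h2⟩ := hpq l hred hl
  obtain ⟨h1', h2'⟩ := hpq l' hred' hl'
  have hce := hw _ _ h1 h1' h2 h2'
  have hperm := commEquiv_perm hce
  have := hperm.count_eq c
  simp only [List.count_append] at this
  omega

/-- Pair filters of reduced words of FC-embedded elements are well defined. -/
theorem fc_filter [DecidableEq B] {w u : W} (hw : IsFC cs w) (h : Emb cs w u)
    {a b : B} (hab : M a b ≠ 2) {l l' : List B} (hred : cs.IsReduced l)
    (hred' : cs.IsReduced l') (hl : π l = u) (hl' : π l' = u) :
    l.filter (fun x => x = a || x = b) = l'.filter (fun x => x = a || x = b) := by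
  obtain ⟨p, q, hpq⟩ := emb_word cs h
  obtain ⟨h1, h2⟩ := hpq l hred hl
  obtain ⟨h1', h2'⟩ := hpq l' hred' hl'
  have hce := hw _ _ h1 h1' h2 h2'
  have := commEquiv_filter hab hce
  simp only [List.filter_append] at this
  exact List.append_cancel_left (List.append_cancel_right this)

-- ### FC descent lemmas

/-- On an FC-embedded element, distinct descent indices give distinct reflections. -/
theorem fc_inj_L {w u : W} (hw : IsFC cs w) (h : Emb cs w u) {a b : B}
    (ha : cs.IsLeftDescent u a) (hb : cs.IsLeftDescent u b) (hs : σ a = σ b) : a = b := by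
  classical
  by_contra hne
  obtain ⟨la, hlared, hlaw, hcared, hcaw⟩ := descent_word_L cs ha
  obtain ⟨lb, hlbred, hlbw, hcbred, hcbw⟩ := descent_word_L cs hb
  have hlbw' : π lb = σ a * u := by rw [hlbw, hs]
  have hemb' : Emb cs w (σ a * u) := emb_stepL cs h ha
  have hcnt := fc_count cs hw hemb' hlared hlbred hlaw hlbw' a
  have hcnt2 := fc_count cs hw h hcared hcbred hcaw hcbw a
  by_cases hba : b = a
  · exact hne hba.symm
  · have h1 : (a :: la).count a = la.count a + 1 := by simp [List.count_cons]
    have h2 : (b :: lb).count a = lb.count a := by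
      simp [List.count_cons, show a ≠ b from fun h => hba h.symm, hba]
    rw [h1, h2] at hcnt2
    omega

theorem fc_inj_R {w u : W} (hw : IsFC cs w) (h : Emb cs w u) {a b : B}
    (ha : cs.IsRightDescent u a) (hb : cs.IsRightDescent u b) (hs : σ a = σ b) : a = b := by
  classical
  by_contra hne
  obtain ⟨la, hlared, hlaw, hcared, hcaw⟩ := descent_word_R cs ha
  obtain ⟨lb, hlbred, hlbw, hcbred, hcbw⟩ := descent_word_R cs hb
  have hlbw' : π lb = u * σ a := by rw [hlbw, hs]
  have hemb' : Emb cs w (u * σ a) := emb_stepR cs h ha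
  have hcnt := fc_count cs hw hemb' hlared hlbred hlaw hlbw' a
  have hcnt2 := fc_count cs hw h hcared hcbred hcaw hcbw a
  by_cases hba : b = a
  · exact hne hba.symm
  · have h1 : (la ++ [a]).count a = la.count a + 1 := by simp [List.count_append]
    have h2 : (lb ++ [b]).count a = lb.count a := by
      simp [List.count_append, show a ≠ b from fun h => hba h.symm, List.count_cons, hba]
    rw [h1, h2] at hcnt2
    omega

/-- Distinct left descents of an FC-embedded element commute. -/
theorem fc_comm_L {w u : W} (hw : IsFC cs w) (h : Emb cs w u) {a b : B}
    (ha : cs.IsLeftDescent u a) (hb : cs.IsLeftDescent u b) (hne : a ≠ b) : M a b = 2 := by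
  classical
  by_contra hab
  obtain ⟨la, hlared, hlaw, hcared, hcaw⟩ := descent_word_L cs ha
  obtain ⟨lb, hlbred, hlbw, hcbred, hcbw⟩ := descent_word_L cs hb
  have := fc_filter cs hw h hab hcared hcbred hcaw hcbw
  rw [List.filter_cons_of_pos (by simp), List.filter_cons_of_pos (by simp)] at this
  exact hne (List.head_eq_of_cons_eq this)

theorem fc_comm_R {w u : W} (hw : IsFC cs w) (h : Emb cs w u) {a b : B}
    (ha : cs.IsRightDescent u a) (hb : cs.IsRightDescent u b) (hne : a ≠ b) : M a b = 2 := by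
  classical
  by_contra hab
  obtain ⟨la, hlared, hlaw, hcared, hcaw⟩ := descent_word_R cs ha
  obtain ⟨lb, hlbred, hlbw, hcbred, hcbw⟩ := descent_word_R cs hb
  have heq := fc_filter cs hw h hab hcared hcbred hcaw hcbw
  rw [List.filter_append, List.filter_append, List.filter_cons_of_pos (by simp),
    List.filter_cons_of_pos (by simp), List.filter_nil] at heq
  have := congrArg List.reverse heq
  simp only [List.reverse_append, List.reverse_cons, List.reverse_nil, List.nil_append,
    List.cons_append] at this
  exact hne (List.head_eq_of_cons_eq this)

/-- If a left descent equals a right descent of an FC-embedded element, the indices agree. -/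
theorem fc_swap_eq {w u : W} (hw : IsFC cs w) (h : Emb cs w u) {i j : B}
    (hi : cs.IsLeftDescent u i) (hj : cs.IsRightDescent u j) (hs : σ i * u = u * σ j) :
    i = j := by
  classical
  obtain ⟨la, hlared, hlaw, hcared, hcaw⟩ := descent_word_L cs hi
  obtain ⟨lb, hlbred, hlbw, hcbred, hcbw⟩ := descent_word_R cs hj
  have hlbw' : π lb = σ i * u := by rw [hlbw, hs]
  have hemb' : Emb cs w (σ i * u) := emb_stepL cs h hi
  have hcnt := fc_count cs hw hemb' hlared hlbred hlaw hlbw' i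
  have hcnt2 := fc_count cs hw h hcared hcbred hcaw hcbw i
  by_contra hne
  have h1 : (i :: la).count i = la.count i + 1 := by simp [List.count_cons]
  have h2 : (lb ++ [j]).count i = lb.count i := by simp [List.count_append, hne, List.count_cons, Ne.symm hne]
  rw [h1, h2] at hcnt2
  omega

-- ### Star step basics

theorem starStep_length {u x : W} (h : StarStep cs u x) : ℓ x + 1 = ℓ u := by
  obtain ⟨a, t, ⟨⟨_, hds, _⟩, rfl⟩ | ⟨⟨_, hds, _⟩, rfl⟩⟩ := h
  · exact (cs.isLeftDescent_iff).mp hds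
  · exact (cs.isRightDescent_iff).mp hds

theorem emb_star {w u x : W} (h : Emb cs w u) (hs : StarStep cs u x) : Emb cs w x := by
  obtain ⟨a, t, ⟨⟨_, hds, _⟩, rfl⟩ | ⟨⟨_, hds, _⟩, rfl⟩⟩ := hs
  · exact emb_stepL cs h hds
  · exact emb_stepR cs h hds

theorem emb_star_rtg {w u x : W} (h : Emb cs w u)
    (hs : Relation.ReflTransGen (StarStep cs) u x) : Emb cs w x := by
  induction hs with
  | refl => exact h
  | tail _ hstep ih => exact emb_star cs ih hstep

theorem big_not_two {a b : B} (h : Big M a b) (h2 : M a b = 2) : False := by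
  rcases h with h | h <;> omega

theorem big_symm {a b : B} (h : Big M a b) : Big M b a := by
  rcases h with h | h
  · left; rwa [M.symmetric]
  · right; rwa [M.symmetric]

theorem irr_no_step {u x : W} (hirr : StarIrreducible cs u) (h : StarStep cs u x) : False := by
  obtain ⟨a, t, ⟨hred, _⟩ | ⟨hred, _⟩⟩ := h
  · exact (hirr a t).1 hred
  · exact (hirr a t).2 hred

-- ### Termination

theorem exists_irr_aux : ∀ n, ∀ u : W, ℓ u ≤ n →
    ∃ y, Relation.ReflTransGen (StarStep cs) u y ∧ StarIrreducible cs y := by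
  intro n
  induction n with
  | zero =>
    intro u hu
    refine ⟨u, Relation.ReflTransGen.refl, ?_⟩
    by_contra hirr
    simp only [StarIrreducible, not_forall, not_and_or, not_not] at hirr
    obtain ⟨a, t, h | h⟩ := hirr
    · have hstep : StarStep cs u (σ a * u) := ⟨a, t, Or.inl ⟨h, rfl⟩⟩
      have := starStep_length cs hstep
      omega
    · have hstep : StarStep cs u (u * σ a) := ⟨a, t, Or.inr ⟨h, rfl⟩⟩
      have := starStep_length cs hstep
      omega
  | succ n ih =>
    intro u hu
    by_cases hirr : StarIrreducible cs u
    · exact ⟨u, Relation.ReflTransGen.refl, hirr⟩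
    · simp only [StarIrreducible, not_forall, not_and_or, not_not] at hirr
      obtain ⟨a, t, h | h⟩ := hirr
      · have hstep : StarStep cs u (σ a * u) := ⟨a, t, Or.inl ⟨h, rfl⟩⟩
        have hlen := starStep_length cs hstep
        obtain ⟨y, hy, hyirr⟩ := ih (σ a * u) (by omega)
        exact ⟨y, Relation.ReflTransGen.head hstep hy, hyirr⟩
      · have hstep : StarStep cs u (u * σ a) := ⟨a, t, Or.inr ⟨h, rfl⟩⟩
        have hlen := starStep_length cs hstep
        obtain ⟨y, hy, hyirr⟩ := ih (u * σ a) (by omega)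
        exact ⟨y, Relation.ReflTransGen.head hstep hy, hyirr⟩

theorem exists_irr (u : W) :
    ∃ y, Relation.ReflTransGen (StarStep cs) u y ∧ StarIrreducible cs y :=
  exists_irr_aux cs (ℓ u) u (le_refl _)

-- ### Isolated letters

/-- `σ i` is an isolated letter over `z`: it commutes with everything in `z`. -/
def Iso (i : B) (z : W) : Prop :=
  σ i * z = z * σ i ∧ ℓ (σ i * z) = ℓ z + 1 ∧
    ∀ l, cs.IsReduced l → π l = z → ∀ c ∈ l, M i c = 2

theorem comm_wordProd {i : B} {l : List B} (h : ∀ c ∈ l, M i c = 2) :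
    σ i * π l = π l * σ i := by
  induction l with
  | nil => simp
  | cons c l ih =>
    rw [cs.wordProd_cons, ← mul_assoc, simple_comm cs (h c (List.mem_cons_self)),
      mul_assoc, ih (fun c hc => h c (List.mem_cons_of_mem _ hc)), ← mul_assoc, mul_assoc]

theorem mem_split_first {a : B} {l : List B} (h : a ∈ l) :
    ∃ l₁ l₂, l = l₁ ++ a :: l₂ ∧ a ∉ l₁ := by
  induction l with
  | nil => simp at h
  | cons x t ih =>
    by_cases hx : x = a
    · exact ⟨[], t, by rw [hx]; simp, by simp⟩
    · have : a ∈ t := by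
        rcases List.mem_cons.mp h with h | h
        · exact absurd h.symm hx
        · exact h
      obtain ⟨l₁, l₂, rfl, hnot⟩ := ih this
      exact ⟨x :: l₁, l₂, by simp, by
        simp only [List.mem_cons, not_or]
        exact ⟨fun h => hx h.symm, hnot⟩⟩

theorem all_eq_of_cons_eq_append {i : B} {F : List B} (h : i :: F = F ++ [i]) :
    ∀ x ∈ F, x = i := by
  induction F with
  | nil => simp
  | cons f F' ih =>
    simp only [List.cons_append] at h
    obtain ⟨h1, h2⟩ := List.cons_eq_cons.mp h
    subst h1
    intro x hx
    rcases List.mem_cons.mp hx with rfl | hx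
    · rfl
    · exact ih h2 x hx

/-- Construct `Iso` from a commuting descent of an FC-embedded element. -/
theorem iso_of {w u : W} {i : B} (hw : IsFC cs w) (h : Emb cs w u)
    (hi : cs.IsLeftDescent u i) (hcomm : σ i * u = u * σ i) : Iso cs i (σ i * u) := by
  classical
  have hzlen : ℓ (σ i * u) + 1 = ℓ u := (cs.isLeftDescent_iff).mp hi
  have hcommz : σ i * (σ i * u) = (σ i * u) * σ i := by
    rw [simple_mul_simple_cancel_left, mul_assoc, ← hcomm, ← mul_assoc,
      cs.simple_mul_simple_self, one_mul]
  have hlen2 : ℓ (σ i * (σ i * u)) = ℓ (σ i * u) + 1 := by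
    rw [simple_mul_simple_cancel_left]; omega
  refine ⟨hcommz, hlen2, ?_⟩
  -- first: letters distinct from i commute with i
  have step1 : ∀ l, cs.IsReduced l → π l = σ i * u → ∀ c ∈ l, c ≠ i → M i c = 2 := by
    intro l hred hl c hc hci
    by_contra hMic
    have hconsred : cs.IsReduced (i :: l) := by
      show ℓ (π (i :: l)) = (i :: l).length
      rw [cs.wordProd_cons, hl, simple_mul_simple_cancel_left]
      have : ℓ (π l) = l.length := hred
      rw [hl] at this
      simp only [List.length_cons]
      omega
    have hconsw : π (i :: l) = u := by
      rw [cs.wordProd_cons, hl, simple_mul_simple_cancel_left]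
    have happred : cs.IsReduced (l ++ [i]) := by
      show ℓ (π (l ++ [i])) = (l ++ [i]).length
      rw [cs.wordProd_append, cs.wordProd_singleton, hl]
      have h1 : σ i * u * σ i = u := by
        rw [hcomm, mul_assoc, cs.simple_mul_simple_self, mul_one]
      rw [h1]
      have : ℓ (π l) = l.length := hred
      rw [hl] at this
      simp only [List.length_append, List.length_singleton]
      omega
    have happw : π (l ++ [i]) = u := by
      rw [cs.wordProd_append, cs.wordProd_singleton, hl, hcomm, mul_assoc,
        cs.simple_mul_simple_self, mul_one]
    have hfil := fc_filter cs hw h hMic hconsred happred hconsw happw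
    rw [List.filter_cons_of_pos (by simp), List.filter_append,
      List.filter_cons_of_pos (by simp), List.filter_nil] at hfil
    have := all_eq_of_cons_eq_append hfil c (by
      rw [List.mem_filter]
      exact ⟨hc, by simp⟩)
    exact hci this
  intro l hred hl c hc
  by_cases hci : c = i
  · exfalso
    have hil : i ∈ l := hci ▸ hc
    obtain ⟨l₁, l₂, rfl, hnot⟩ := mem_split_first hil
    have hcomm1 : σ i * π l₁ = π l₁ * σ i :=
      comm_wordProd cs (fun d hd => step1 _ hred hl d
        (List.mem_append.mpr (Or.inl hd)) (fun hdc => hnot (hdc ▸ hd)))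
    have hzval : σ i * π (l₁ ++ i :: l₂) = π (l₁ ++ l₂) := by
      rw [cs.wordProd_append, cs.wordProd_cons, ← mul_assoc, hcomm1,
        mul_assoc (π l₁), simple_mul_simple_cancel_left, ← cs.wordProd_append]
    have hle : ℓ (σ i * (σ i * u)) ≤ (l₁ ++ l₂).length := by
      rw [← hl, hzval]
      exact cs.length_wordProd_le _
    rw [simple_mul_simple_cancel_left] at hle
    have hll : ℓ (π (l₁ ++ i :: l₂)) = (l₁ ++ i :: l₂).length := hred
    rw [hl] at hll
    simp only [List.length_append, List.length_cons] at hll hle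
    omega
  · exact step1 l hred hl c hc hci

theorem iso_mem_ne_L {i b : B} {z : W} (hiso : Iso cs i z) (hb : cs.IsLeftDescent z b) :
    M i b = 2 := by
  obtain ⟨l, _, _, hcred, hcw⟩ := descent_word_L cs hb
  exact hiso.2.2 _ hcred hcw b (List.mem_cons_self)

theorem iso_mem_ne_R {i b : B} {z : W} (hiso : Iso cs i z) (hb : cs.IsRightDescent z b) :
    M i b = 2 := by
  obtain ⟨l, _, _, hcred, hcw⟩ := descent_word_R cs hb
  exact hiso.2.2 _ hcred hcw b (by simp)

theorem iso_stepL {i b : B} {z : W} (hiso : Iso cs i z) (hb : cs.IsLeftDescent z b) :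
    Iso cs i (σ b * z) := by
  have hMib := iso_mem_ne_L cs hiso hb
  have hblen : ℓ (σ b * z) + 1 = ℓ z := (cs.isLeftDescent_iff).mp hb
  have hword : ∀ l, cs.IsReduced l → π l = σ b * z → ∀ c ∈ l, M i c = 2 := by
    intro l hred hl c hc
    have hconsred : cs.IsReduced (b :: l) := by
      show ℓ (π (b :: l)) = (b :: l).length
      rw [cs.wordProd_cons, hl, simple_mul_simple_cancel_left]
      have : ℓ (π l) = l.length := hred
      rw [hl] at this
      simp only [List.length_cons]
      omega
    have hconsw : π (b :: l) = z := by
      rw [cs.wordProd_cons, hl, simple_mul_simple_cancel_left]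
    exact hiso.2.2 _ hconsred hconsw c (List.mem_cons_of_mem _ hc)
  refine ⟨?_, ?_, hword⟩
  · rw [← mul_assoc, simple_comm cs hMib, mul_assoc, hiso.1, ← mul_assoc, mul_assoc]
  · rcases cs.length_simple_mul (σ b * z) i with h | h
    · exact h
    · exfalso
      have hdesc : cs.IsLeftDescent (σ b * z) i := by
        show ℓ (σ i * (σ b * z)) < ℓ (σ b * z)
        omega
      obtain ⟨l, _, _, hcred, hcw⟩ := descent_word_L cs hdesc
      have := hword _ hcred hcw i (List.mem_cons_self)
      rw [M.diagonal] at this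
      omega

theorem iso_stepR {i b : B} {z : W} (hiso : Iso cs i z) (hb : cs.IsRightDescent z b) :
    Iso cs i (z * σ b) := by
  have hMib := iso_mem_ne_R cs hiso hb
  have hblen : ℓ (z * σ b) + 1 = ℓ z := (cs.isRightDescent_iff).mp hb
  have hword : ∀ l, cs.IsReduced l → π l = z * σ b → ∀ c ∈ l, M i c = 2 := by
    intro l hred hl c hc
    have happred : cs.IsReduced (l ++ [b]) := by
      show ℓ (π (l ++ [b])) = (l ++ [b]).length
      rw [cs.wordProd_append, cs.wordProd_singleton, hl, mul_assoc,
        cs.simple_mul_simple_self, mul_one]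
      have : ℓ (π l) = l.length := hred
      rw [hl] at this
      simp only [List.length_append, List.length_singleton]
      omega
    have happw : π (l ++ [b]) = z := by
      rw [cs.wordProd_append, cs.wordProd_singleton, hl, mul_assoc,
        cs.simple_mul_simple_self, mul_one]
    exact hiso.2.2 _ happred happw c (List.mem_append.mpr (Or.inl hc))
  refine ⟨?_, ?_, hword⟩
  · rw [← mul_assoc, hiso.1, mul_assoc, simple_comm cs hMib, ← mul_assoc]
  · rcases cs.length_simple_mul (z * σ b) i with h | h
    · exact h
    · exfalso
      have hdesc : cs.IsLeftDescent (z * σ b) i := by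
        show ℓ (σ i * (z * σ b)) < ℓ (z * σ b)
        omega
      obtain ⟨l, _, _, hcred, hcw⟩ := descent_word_L cs hdesc
      have := hword _ hcred hcw i (List.mem_cons_self)
      rw [M.diagonal] at this
      omega

theorem iso_star {i : B} {z z₂ : W} (hiso : Iso cs i z) (h : StarStep cs z z₂) :
    Iso cs i z₂ := by
  obtain ⟨a, t, ⟨⟨_, hds, _⟩, rfl⟩ | ⟨⟨_, hds, _⟩, rfl⟩⟩ := h
  · exact iso_stepL cs hiso hds
  · exact iso_stepR cs hiso hds

-- ### Descents across an isolated letter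

theorem iso_descent_self_L {i : B} {z : W} (hiso : Iso cs i z) :
    cs.IsLeftDescent (σ i * z) i := by
  show ℓ (σ i * (σ i * z)) < ℓ (σ i * z)
  rw [simple_mul_simple_cancel_left, hiso.2.1]
  omega

theorem iso_descent_self_R {i : B} {z : W} (hiso : Iso cs i z) :
    cs.IsRightDescent (σ i * z) i := by
  show ℓ (σ i * z * σ i) < ℓ (σ i * z)
  have h1 : σ i * z * σ i = z := by
    rw [hiso.1, mul_assoc, cs.simple_mul_simple_self, mul_one]
  rw [h1, hiso.2.1]
  omega

theorem iso_descent_L_mpr {i b : B} {z : W} (hiso : Iso cs i z)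
    (h : b = i ∨ cs.IsLeftDescent z b) : cs.IsLeftDescent (σ i * z) b := by
  rcases h with rfl | h
  · exact iso_descent_self_L cs hiso
  · show ℓ (σ b * (σ i * z)) < ℓ (σ i * z)
    have hMib := iso_mem_ne_L cs hiso h
    rw [← mul_assoc, ← simple_comm cs hMib, mul_assoc]
    have h1 : ℓ (σ b * z) + 1 = ℓ z := (cs.isLeftDescent_iff).mp h
    have h2 : ℓ (σ i * (σ b * z)) ≤ ℓ (σ b * z) + 1 := by
      have := cs.length_mul_le (σ i) (σ b * z)
      rw [cs.length_simple] at this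
      omega
    rw [hiso.2.1]
    omega

theorem iso_descent_R_mpr {i b : B} {z : W} (hiso : Iso cs i z)
    (h : b = i ∨ cs.IsRightDescent z b) : cs.IsRightDescent (σ i * z) b := by
  rcases h with rfl | h
  · exact iso_descent_self_R cs hiso
  · show ℓ (σ i * z * σ b) < ℓ (σ i * z)
    have hMib := iso_mem_ne_R cs hiso h
    have h1 : ℓ (z * σ b) + 1 = ℓ z := (cs.isRightDescent_iff).mp h
    have h2 : ℓ (σ i * (z * σ b)) ≤ ℓ (z * σ b) + 1 := by
      have := cs.length_mul_le (σ i) (z * σ b)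
      rw [cs.length_simple] at this
      omega
    rw [mul_assoc, hiso.2.1]
    omega

theorem iso_descent_L_mp {w : W} {i b : B} {z : W} (hw : IsFC cs w)
    (hemb : Emb cs w (σ i * z)) (hiso : Iso cs i z)
    (h : cs.IsLeftDescent (σ i * z) b) : b = i ∨ cs.IsLeftDescent z b := by
  by_cases hbi : b = i
  · exact Or.inl hbi
  · right
    have hne : σ b ≠ σ i := by
      intro hs
      exact hbi (fc_inj_L cs hw hemb h (iso_descent_self_L cs hiso) hs)
    have := descent_descent_L cs h (iso_descent_self_L cs hiso) hne
    rwa [simple_mul_simple_cancel_left] at this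

theorem iso_descent_R_mp {w : W} {i b : B} {z : W} (hw : IsFC cs w)
    (hemb : Emb cs w (σ i * z)) (hiso : Iso cs i z)
    (h : cs.IsRightDescent (σ i * z) b) : b = i ∨ cs.IsRightDescent z b := by
  by_cases hbi : b = i
  · exact Or.inl hbi
  · right
    have hne : σ b ≠ σ i := by
      intro hs
      exact hbi (fc_inj_R cs hw hemb h (iso_descent_self_R cs hiso) hs)
    have := descent_descent_R cs h (iso_descent_self_R cs hiso) hne
    have heq : σ i * z * σ i = z := by
      rw [hiso.1, mul_assoc, cs.simple_mul_simple_self, mul_one]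
    rwa [heq] at this

-- ### Transporting star steps across an isolated letter

theorem iso_step_up {i : B} {z z₂ : W} (hiso : Iso cs i z) (h : StarStep cs z z₂) :
    StarStep cs (σ i * z) (σ i * z₂) := by
  obtain ⟨b, r, ⟨⟨hbig, hds, hdt⟩, rfl⟩ | ⟨⟨hbig, hds, hdt⟩, rfl⟩⟩ := h
  · have hMib := iso_mem_ne_L cs hiso hds
    have hiso2 := iso_stepL cs hiso hds
    refine ⟨b, r, Or.inl ⟨⟨hbig, iso_descent_L_mpr cs hiso (Or.inr hds), ?_⟩, ?_⟩⟩
    · have hcomm : σ b * (σ i * z) = σ i * (σ b * z) := by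
        rw [← mul_assoc, ← simple_comm cs hMib, mul_assoc]
      rw [hcomm]
      exact iso_descent_L_mpr cs hiso2 (Or.inr hdt)
    · rw [← mul_assoc, simple_comm cs hMib, mul_assoc]
  · have hMib := iso_mem_ne_R cs hiso hds
    have hiso2 := iso_stepR cs hiso hds
    refine ⟨b, r, Or.inr ⟨⟨hbig, iso_descent_R_mpr cs hiso (Or.inr hds), ?_⟩, ?_⟩⟩
    · rw [mul_assoc]
      exact iso_descent_R_mpr cs hiso2 (Or.inr hdt)
    · rw [mul_assoc]

theorem iso_step_up_rtg {i : B} {z y : W} (hiso : Iso cs i z)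
    (h : Relation.ReflTransGen (StarStep cs) z y) :
    Relation.ReflTransGen (StarStep cs) (σ i * z) (σ i * y) ∧ Iso cs i y := by
  induction h with
  | refl => exact ⟨Relation.ReflTransGen.refl, hiso⟩
  | tail hsteps hstep ih =>
    exact ⟨Relation.ReflTransGen.tail ih.1 (iso_step_up cs ih.2 hstep),
      iso_star cs ih.2 hstep⟩

theorem iso_step_down {w : W} {i : B} {z x : W} (hw : IsFC cs w)
    (hemb : Emb cs w (σ i * z)) (hiso : Iso cs i z) (h : StarStep cs (σ i * z) x) :
    ∃ z₂, StarStep cs z z₂ ∧ x = σ i * z₂ := by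
  obtain ⟨b, r, ⟨⟨hbig, hds, hdt⟩, rfl⟩ | ⟨⟨hbig, hds, hdt⟩, rfl⟩⟩ := h
  · rcases iso_descent_L_mp cs hw hemb hiso hds with rfl | hds'
    · exfalso
      rw [simple_mul_simple_cancel_left] at hdt
      exact big_not_two hbig (iso_mem_ne_L cs hiso hdt)
    · have hMib := iso_mem_ne_L cs hiso hds'
      have hiso2 := iso_stepL cs hiso hds'
      have hcomm : σ b * (σ i * z) = σ i * (σ b * z) := by
        rw [← mul_assoc, ← simple_comm cs hMib, mul_assoc]
      have hemb2 : Emb cs w (σ i * (σ b * z)) := by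
        rw [← hcomm]
        exact emb_stepL cs hemb hds
      rw [hcomm] at hdt
      rcases iso_descent_L_mp cs hw hemb2 hiso2 hdt with rfl | hdt'
      · exfalso
        apply big_not_two hbig
        rw [M.symmetric]
        exact hMib
      · exact ⟨σ b * z, ⟨b, r, Or.inl ⟨⟨hbig, hds', hdt'⟩, rfl⟩⟩, hcomm⟩
  · rcases iso_descent_R_mp cs hw hemb hiso hds with rfl | hds'
    · exfalso
      have heq : σ b * z * σ b = z := by
        rw [hiso.1, mul_assoc, cs.simple_mul_simple_self, mul_one]
      rw [heq] at hdt
      exact big_not_two hbig (iso_mem_ne_R cs hiso hdt)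
    · have hMib := iso_mem_ne_R cs hiso hds'
      have hiso2 := iso_stepR cs hiso hds'
      have hcomm : (σ i * z) * σ b = σ i * (z * σ b) := mul_assoc _ _ _
      have hemb2 : Emb cs w (σ i * (z * σ b)) := by
        rw [← hcomm]
        exact emb_stepR cs hemb hds
      rw [hcomm] at hdt
      rcases iso_descent_R_mp cs hw hemb2 hiso2 hdt with rfl | hdt'
      · exfalso
        apply big_not_two hbig
        rw [M.symmetric]
        exact hMib
      · exact ⟨z * σ b, ⟨b, r, Or.inr ⟨⟨hbig, hds', hdt'⟩, rfl⟩⟩, hcomm⟩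

theorem iso_irr {w : W} {i : B} {y : W} (hw : IsFC cs w) (hemb : Emb cs w (σ i * y))
    (hiso : Iso cs i y) (hirr : StarIrreducible cs y) : StarIrreducible cs (σ i * y) := by
  intro a t
  constructor
  · intro hred
    obtain ⟨z₂, hstep, _⟩ := iso_step_down cs hw hemb hiso ⟨a, t, Or.inl ⟨hred, rfl⟩⟩
    exact irr_no_step cs hirr hstep
  · intro hred
    obtain ⟨z₂, hstep, _⟩ := iso_step_down cs hw hemb hiso ⟨a, t, Or.inr ⟨hred, rfl⟩⟩
    exact irr_no_step cs hirr hstep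

-- ### The local lemma

/-- The possible joint outcomes of two star steps from a common FC element. -/
def Outcome (u1 u2 : W) : Prop :=
  u1 = u2 ∨ (∃ z, StarStep cs u1 z ∧ StarStep cs u2 z) ∨
    (∃ a b z, Iso cs a z ∧ Iso cs b z ∧ u1 = σ a * z ∧ u2 = σ b * z)

theorem outcome_symm {u1 u2 : W} (h : Outcome cs u1 u2) : Outcome cs u2 u1 := by
  rcases h with h | ⟨z, h1, h2⟩ | ⟨a, b, z, ha, hb, h1, h2⟩
  · exact Or.inl h.symm
  · exact Or.inr (Or.inl ⟨z, h2, h1⟩)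
  · exact Or.inr (Or.inr ⟨b, a, z, hb, ha, h2, h1⟩)

theorem local_LL {w x : W} {s t s' t' : B} (hw : IsFC cs w) (hx : Emb cs w x)
    (h1 : IsLeftStarReducible cs s t x) (h2 : IsLeftStarReducible cs s' t' x) :
    Outcome cs (σ s * x) (σ s' * x) := by
  obtain ⟨hbig1, hds, hdt⟩ := h1
  obtain ⟨hbig2, hds', hdt'⟩ := h2
  by_cases heq : σ s * x = σ s' * x
  · exact Or.inl heq
  have hσne : σ s ≠ σ s' := fun hss => heq (by rw [hss])
  have hsne : s ≠ s' := fun h => hσne (h ▸ rfl)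
  have hM : M s s' = 2 := fc_comm_L cs hw hx hds hds' hsne
  have hcomm : σ s * σ s' = σ s' * σ s := simple_comm cs hM
  have hs'u1 : cs.IsLeftDescent (σ s * x) s' := descent_descent_L cs hds' hds hσne.symm
  have hsu2 : cs.IsLeftDescent (σ s' * x) s := descent_descent_L cs hds hds' hσne
  have ht's : t' ≠ s := by
    rintro rfl
    exact big_not_two hbig2 (by rw [M.symmetric]; exact hM)
  have hσt's : σ t' ≠ σ s := by
    intro hs2
    exact ht's (fc_inj_L cs hw (emb_stepL cs hx hds') hdt' hsu2 hs2)
  have ht'z : cs.IsLeftDescent (σ s * (σ s' * x)) t' := descent_descent_L cs hdt' hsu2 hσt's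
  have hts' : t ≠ s' := by
    rintro rfl
    exact big_not_two hbig1 hM
  have hσts' : σ t ≠ σ s' := by
    intro hs2
    exact hts' (fc_inj_L cs hw (emb_stepL cs hx hds) hdt hs'u1 hs2)
  have htz : cs.IsLeftDescent (σ s' * (σ s * x)) t := descent_descent_L cs hdt hs'u1 hσts'
  have hzeq : σ s * (σ s' * x) = σ s' * (σ s * x) := by
    rw [← mul_assoc, hcomm, mul_assoc]
  refine Or.inr (Or.inl ⟨σ s' * (σ s * x), ?_, ?_⟩)
  · exact ⟨s', t', Or.inl ⟨⟨hbig2, hs'u1, by rw [hzeq] at ht'z; exact ht'z⟩, rfl⟩⟩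
  · exact ⟨s, t, Or.inl ⟨⟨hbig1, hsu2, by rw [hzeq]; exact htz⟩, hzeq.symm⟩⟩

theorem local_RR {w x : W} {s t s' t' : B} (hw : IsFC cs w) (hx : Emb cs w x)
    (h1 : IsRightStarReducible cs s t x) (h2 : IsRightStarReducible cs s' t' x) :
    Outcome cs (x * σ s) (x * σ s') := by
  obtain ⟨hbig1, hds, hdt⟩ := h1
  obtain ⟨hbig2, hds', hdt'⟩ := h2
  by_cases heq : x * σ s = x * σ s'
  · exact Or.inl heq
  have hσne : σ s ≠ σ s' := fun hss => heq (by rw [hss])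
  have hsne : s ≠ s' := fun h => hσne (h ▸ rfl)
  have hM : M s s' = 2 := fc_comm_R cs hw hx hds hds' hsne
  have hcomm : σ s * σ s' = σ s' * σ s := simple_comm cs hM
  have hs'u1 : cs.IsRightDescent (x * σ s) s' := descent_descent_R cs hds' hds hσne.symm
  have hsu2 : cs.IsRightDescent (x * σ s') s := descent_descent_R cs hds hds' hσne
  have ht's : t' ≠ s := by
    rintro rfl
    exact big_not_two hbig2 (by rw [M.symmetric]; exact hM)
  have hσt's : σ t' ≠ σ s := by
    intro hs2
    exact ht's (fc_inj_R cs hw (emb_stepR cs hx hds') hdt' hsu2 hs2)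
  have ht'z : cs.IsRightDescent (x * σ s' * σ s) t' := descent_descent_R cs hdt' hsu2 hσt's
  have hts' : t ≠ s' := by
    rintro rfl
    exact big_not_two hbig1 hM
  have hσts' : σ t ≠ σ s' := by
    intro hs2
    exact hts' (fc_inj_R cs hw (emb_stepR cs hx hds) hdt hs'u1 hs2)
  have htz : cs.IsRightDescent (x * σ s * σ s') t := descent_descent_R cs hdt hs'u1 hσts'
  have hzeq : x * σ s * σ s' = x * σ s' * σ s := by
    rw [mul_assoc, mul_assoc, hcomm]
  refine Or.inr (Or.inl ⟨x * σ s * σ s', ?_, ?_⟩)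
  · exact ⟨s', t', Or.inr ⟨⟨hbig2, hs'u1, by rw [← hzeq] at ht'z; exact ht'z⟩, rfl⟩⟩
  · exact ⟨s, t, Or.inr ⟨⟨hbig1, hsu2, by rw [hzeq] at htz; exact htz⟩, hzeq⟩⟩

theorem local_LR {w x : W} {s t s' t' : B} (hw : IsFC cs w) (hx : Emb cs w x)
    (h1 : IsLeftStarReducible cs s t x) (h2 : IsRightStarReducible cs s' t' x) :
    Outcome cs (σ s * x) (x * σ s') := by
  obtain ⟨hbig1, hds, hdt⟩ := h1
  obtain ⟨hbig2, hds', hdt'⟩ := h2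
  by_cases hne : σ s * x = x * σ s'
  · exact Or.inl hne
  rcases dichotomy_LR cs hds hds' with heq | ⟨hrs', hls⟩
  · exact absurd heq hne
  -- sub-dichotomy A on u1 = σ s * x
  rcases dichotomy_LR cs hdt hrs' with hAeq | ⟨_, hAt⟩
  · -- bad case
    have hteq : t = s' := fc_swap_eq cs hw (emb_stepL cs hx hds) hdt hrs' hAeq
    subst hteq
    have hIso : Iso cs t (σ t * (σ s * x)) :=
      iso_of cs hw (emb_stepL cs hx hds) hdt hAeq
    -- now sub-dichotomy B must be eq as well
    rcases dichotomy_LR cs hls hdt' with hBeq | ⟨hBt', _⟩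
    · have hseq : s = t' := fc_swap_eq cs hw (emb_stepR cs hx hds') hls hdt' hBeq
      subst hseq
      have hIso2 : Iso cs s (σ s * (x * σ t)) :=
        iso_of cs hw (emb_stepR cs hx hds') hls hBeq
      have hz12 : σ s * (x * σ t) = σ t * (σ s * x) := by
        rw [hAeq, mul_assoc]
      refine Or.inr (Or.inr ⟨t, s, σ t * (σ s * x), hIso, hz12 ▸ hIso2, ?_, ?_⟩)
      · rw [simple_mul_simple_cancel_left]
      · rw [← hz12, simple_mul_simple_cancel_left]
    · exfalso
      have hBt'' : cs.IsRightDescent (σ t * (σ s * x)) t' := by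
        have hzz : σ s * (x * σ t) = σ t * (σ s * x) := by
          rw [hAeq, mul_assoc]
        rwa [hzz] at hBt'
      exact big_not_two hbig2 (iso_mem_ne_R cs hIso hBt'')
  · -- A gives descents; derive same for B
    rcases dichotomy_LR cs hls hdt' with hBeq | ⟨hBt', _⟩
    · exfalso
      have hseq : s = t' := fc_swap_eq cs hw (emb_stepR cs hx hds') hls hdt' hBeq
      subst hseq
      have hIso2 : Iso cs s (σ s * (x * σ s')) :=
        iso_of cs hw (emb_stepR cs hx hds') hls hBeq
      have hAt' : cs.IsLeftDescent (σ s * (x * σ s')) t := by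
        rwa [mul_assoc] at hAt
      exact big_not_two hbig1 (iso_mem_ne_L cs hIso2 hAt')
    · refine Or.inr (Or.inl ⟨σ s * x * σ s', ?_, ?_⟩)
      · exact ⟨s', t', Or.inr ⟨⟨hbig2, hrs', by rwa [← mul_assoc] at hBt'⟩, rfl⟩⟩
      · exact ⟨s, t, Or.inl ⟨⟨hbig1, hls, by rw [← mul_assoc]; exact hAt⟩,
          (mul_assoc _ _ _)⟩⟩

theorem local_confluence {w x u1 u2 : W} (hw : IsFC cs w) (hx : Emb cs w x)
    (h1 : StarStep cs x u1) (h2 : StarStep cs x u2) : Outcome cs u1 u2 := by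
  obtain ⟨s, t, ⟨hr1, rfl⟩ | ⟨hr1, rfl⟩⟩ := h1 <;>
    obtain ⟨s', t', ⟨hr2, rfl⟩ | ⟨hr2, rfl⟩⟩ := h2
  · exact local_LL cs hw hx hr1 hr2
  · exact local_LR cs hw hx hr1 hr2
  · exact outcome_symm cs (local_LR cs hw hx hr2 hr1)
  · exact local_RR cs hw hx hr1 hr2

-- ### The main induction

theorem main_aux {w : W} (hw : IsFC cs w) :
    ∀ n, ∀ x : W, ℓ x ≤ n → Emb cs w x → ∀ v v' : W,
      Relation.ReflTransGen (StarStep cs) x v →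
      Relation.ReflTransGen (StarStep cs) x v' →
      StarIrreducible cs v → StarIrreducible cs v' → ℓ v = ℓ v' := by
  intro n
  induction n with
  | zero =>
    intro x hx hemb v v' h1 h2 hv hv'
    rcases Relation.ReflTransGen.cases_head h1 with rfl | ⟨u1, hstep1, htail1⟩
    · rcases Relation.ReflTransGen.cases_head h2 with rfl | ⟨u2, hstep2, _⟩
      · rfl
      · exact absurd hstep2 (fun h => irr_no_step cs hv h)
    · have := starStep_length cs hstep1
      omega
  | succ n ih =>
    intro x hx hemb v v' h1 h2 hv hv'
    rcases Relation.ReflTransGen.cases_head h1 with rfl | ⟨u1, hstep1, htail1⟩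
    · rcases Relation.ReflTransGen.cases_head h2 with rfl | ⟨u2, hstep2, _⟩
      · rfl
      · exact absurd hstep2 (fun h => irr_no_step cs hv h)
    rcases Relation.ReflTransGen.cases_head h2 with rfl | ⟨u2, hstep2, htail2⟩
    · exact absurd hstep1 (fun h => irr_no_step cs hv' h)
    have hlu1 := starStep_length cs hstep1
    have hlu2 := starStep_length cs hstep2
    have hemb1 : Emb cs w u1 := emb_star cs hemb hstep1
    have hemb2 : Emb cs w u2 := emb_star cs hemb hstep2
    rcases local_confluence cs hw hemb hstep1 hstep2 with heq | ⟨z, hz1, hz2⟩ |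
      ⟨a, b, z, hisoa, hisob, rfl, hu2z⟩
    · subst heq
      exact ih u1 (by omega) hemb1 v v' htail1 htail2 hv hv'
    · obtain ⟨y, hy, hyirr⟩ := exists_irr cs z
      have e1 := ih u1 (by omega) hemb1 v y htail1 (Relation.ReflTransGen.head hz1 hy) hv hyirr
      have e2 := ih u2 (by omega) hemb2 v' y htail2 (Relation.ReflTransGen.head hz2 hy) hv' hyirr
      rw [e1, e2]
    · subst hu2z
      obtain ⟨y, hy, hyirr⟩ := exists_irr cs z
      obtain ⟨chaina, hisoay⟩ := iso_step_up_rtg cs hisoa hy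
      obtain ⟨chainb, hisoby⟩ := iso_step_up_rtg cs hisob hy
      have hembay : Emb cs w (σ a * y) := emb_star_rtg cs hemb1 chaina
      have hembby : Emb cs w (σ b * y) := emb_star_rtg cs hemb2 chainb
      have hirray := iso_irr cs hw hembay hisoay hyirr
      have hirrby := iso_irr cs hw hembby hisoby hyirr
      have e1 := ih (σ a * z) (by omega) hemb1 v (σ a * y) htail1 chaina hv hirray
      have e2 := ih (σ b * z) (by omega) hemb2 v' (σ b * y) htail2 chainb hv' hirrby
      rw [e1, e2, hisoay.2.1, hisoby.2.1]

end Exchange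


theorem stmt8 {B W : Type*} [Group W] {M : CoxeterMatrix B}
    (cs : CoxeterSystem M W) (w : W) (hw : IsFC cs w) (v v' : W)
    (h1 : Relation.ReflTransGen (StarStep cs) w v)
    (h2 : Relation.ReflTransGen (StarStep cs) w v')
    (hv : StarIrreducible cs v) (hv' : StarIrreducible cs v') :
    cs.length v = cs.length v' :=
  main_aux cs hw (cs.length w) w (le_refl _) (emb_refl cs w) v v' h1 h2 hv hv'


end CoxFC
end

section
/- Let W be a Coxeter group of affine type D̃_{n+2} with n even, and let w ∈ FC(W) be a candy element with Cartier–Foata normal form w = u_0 ⋯ u_m. Then w is star irreducible. -/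
open CoxeterSystem

namespace CoxFC


open CoxeterSystem


variable {B : Type*} {W : Type*} [Group W] {M : CoxeterMatrix B}

/-- One orientation of the edges of the Coxeter graph of type D̃_{n+2}. -/
def DHalf (n a b : ℕ) : Prop :=
  (a = 0 ∧ b = 2) ∨ (a = 1 ∧ b = 2) ∨ (2 ≤ a ∧ a ≤ n ∧ b = a + 1) ∨ (a = n ∧ b = n + 2)

/-- Adjacency (bond of order 3) in the Coxeter graph of type D̃_{n+2}:
`s_0, s_1` are joined to `s_2`, `s_2 — s_3 — ⋯ — s_n` is a path, and
`s_{n+1}, s_{n+2}` are joined to `s_n`. -/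
def DAdj (n a b : ℕ) : Prop := DHalf n a b ∨ DHalf n b a

instance (n a b : ℕ) : Decidable (DAdj n a b) := by unfold DAdj DHalf; infer_instance

lemma dAdj_symm (n a b : ℕ) : DAdj n a b ↔ DAdj n b a := or_comm

lemma dHalf_ne (n a b : ℕ) (h : DHalf n a b) : a ≠ b := by unfold DHalf at h; omega

lemma dAdj_ne (n a b : ℕ) (h : DAdj n a b) : a ≠ b := by
  rcases h with h | h
  · exact dHalf_ne n a b h
  · exact (dHalf_ne n b a h).symm

/-- The Coxeter matrix of affine type D̃_{n+2}, with vertices `s_0, …, s_{n+2}`. -/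
def DMatrix (n : ℕ) : CoxeterMatrix (Fin (n+3)) where
  M := Matrix.of fun i j : Fin (n+3) ↦
    if DAdj n i j then 3 else if i = j then 1 else 2
  isSymm := by
    apply Matrix.IsSymm.ext
    intro i j
    simp only [Matrix.of_apply]
    by_cases h : DAdj n (i : ℕ) (j : ℕ)
    · rw [if_pos h, if_pos ((dAdj_symm n (i : ℕ) (j : ℕ)).mp h)]
    · rw [if_neg h, if_neg (fun hh => h ((dAdj_symm n (j : ℕ) (i : ℕ)).mp hh))]
      by_cases h2 : (j : Fin (n+3)) = i
      · simp [h2]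
      · rw [if_neg h2, if_neg (fun hh => h2 hh.symm)]
  diagonal i := by
    have : ¬ DAdj n (i : ℕ) (i : ℕ) := fun h => dAdj_ne n i i h rfl
    simp [this]
  off_diagonal i j h := by
    have h2 : (i : Fin (n+3)) ≠ j := h
    by_cases hA : DAdj n (i : ℕ) (j : ℕ) <;> simp [Matrix.of_apply, hA, h2]

/-- The generator `s_k` of type D̃_{n+2}, for `k ≤ n+2`. -/
def dv (n k : ℕ) : Fin (n+3) := ⟨k % (n+3), Nat.mod_lt _ (Nat.succ_pos _)⟩



variable {n : ℕ} {W : Type*} [Group W]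

/-- The generators `{s_3, s_5, …, s_{n-1}}` (odd indices from 3 to n-1). -/
def OddCore (n : ℕ) : Set (Fin (n+3)) :=
  {a | 3 ≤ (a : ℕ) ∧ (a : ℕ) ≤ n - 1 ∧ (a : ℕ) % 2 = 1}

/-- The generators `{s_2, s_4, …, s_n}` (even indices from 2 to n). -/
def EvenCore (n : ℕ) : Set (Fin (n+3)) :=
  {a | 2 ≤ (a : ℕ) ∧ (a : ℕ) ≤ n ∧ (a : ℕ) % 2 = 0}

/-- A candy element of type D̃_{n+2} (for n even): an FC element whose
Cartier–Foata normal form `u_0 ⋯ u_m` has `m ≥ 2` even,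
`supp(u_{2i}) = {s_3, s_5, …, s_{n-1}} ∪ {x_i, y_i}` with `x_i ∈ {s_0, s_1}`,
`y_i ∈ {s_{n+1}, s_{n+2}}`, `x_i ≠ x_{i+1}`, `y_i ≠ y_{i+1}`, and
`supp(u_{2i+1}) = {s_2, s_4, …, s_n}`. -/
def IsCandy (cs : CoxeterSystem (DMatrix n) W) (w : W) : Prop :=
  ∃ (us : List (List (Fin (n+3)))) (m : ℕ) (x y : ℕ → Fin (n+3)),
    IsCFNF cs w us ∧ us.length = m + 1 ∧ 2 ≤ m ∧ m % 2 = 0 ∧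
    (∀ i : ℕ, 2*i ≤ m →
      ((x i : ℕ) = 0 ∨ (x i : ℕ) = 1) ∧ ((y i : ℕ) = n+1 ∨ (y i : ℕ) = n+2) ∧
      {a | a ∈ us.getD (2*i) []} = OddCore n ∪ {x i, y i}) ∧
    (∀ i : ℕ, 2*(i+1) ≤ m → x i ≠ x (i+1) ∧ y i ≠ y (i+1)) ∧
    (∀ i : ℕ, 2*i+1 ≤ m → {a | a ∈ us.getD (2*i+1) []} = EvenCore n)

/-- The word `A = s_2 s_3 ⋯ s_n s_{n+1} s_{n+2}`. -/
def AWord (n : ℕ) : List (Fin (n+3)) := (List.range' 2 (n+1)).map (dv n)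

/-- The word `B = s_n s_{n-1} ⋯ s_2 s_1 s_0`. -/
def BWord (n : ℕ) : List (Fin (n+3)) := ((List.range (n+1)).reverse).map (dv n)

/-- The word `s_0 s_1 (AB)^k A^h`. -/
def ZigWord1 (n k h : ℕ) : List (Fin (n+3)) :=
  [dv n 0, dv n 1] ++ (List.replicate k (AWord n ++ BWord n)).flatten ++
    (List.replicate h (AWord n)).flatten

/-- The word `s_{n+2} s_{n+1} (BA)^k B^h`. -/
def ZigWord2 (n k h : ℕ) : List (Fin (n+3)) :=
  [dv n (n+2), dv n (n+1)] ++ (List.replicate k (BWord n ++ AWord n)).flatten ++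
    (List.replicate h (BWord n)).flatten

/-- A complete zigzag: an element admitting a reduced expression
`s_0 s_1 (AB)^k A^h` or `s_{n+2} s_{n+1} (BA)^k B^h`, `k ≥ 0`, `h ∈ {0,1}`, `k+h > 0`. -/
def IsCompleteZigzag (cs : CoxeterSystem (DMatrix n) W) (w : W) : Prop :=
  ∃ k h : ℕ, h ≤ 1 ∧ 0 < k + h ∧
    ((cs.IsReduced (ZigWord1 n k h) ∧ cs.wordProd (ZigWord1 n k h) = w) ∨
     (cs.IsReduced (ZigWord2 n k h) ∧ cs.wordProd (ZigWord2 n k h) = w))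

/-- A weak zigzag: a factor of a complete zigzag that is not a product of
pairwise commuting generators. -/
def IsWeakZigzag (cs : CoxeterSystem (DMatrix n) W) (w : W) : Prop :=
  (∃ z x y : W, IsCompleteZigzag cs z ∧ z = x * w * y ∧
      cs.length z = cs.length x + cs.length w + cs.length y) ∧ ¬ IsCC cs w

/-- The number of occurrences of the (contiguous) factor `a b` in the word `l`. -/
def CountFactor {n : ℕ} (a b : Fin (n+3)) (l : List (Fin (n+3))) : ℕ :=
  (List.range (l.length - 1)).countP
    (fun i => (l.getD i a == a) && (l.getD (i+1) b == b))

/-- `f_•(w)`: the maximal number of occurrences of the factor `s_0 s_1` over all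
reduced expressions of `w`. -/
noncomputable def fBullet (cs : CoxeterSystem (DMatrix n) W) (w : W) : ℕ :=
  sSup {c | ∃ l, cs.IsReduced l ∧ cs.wordProd l = w ∧
    CountFactor (dv n 0) (dv n 1) l = c}

/-- `f_∘(w)`: the maximal number of occurrences of the factor `s_{n+1} s_{n+2}`
over all reduced expressions of `w`. -/
noncomputable def fCirc (cs : CoxeterSystem (DMatrix n) W) (w : W) : ℕ :=
  sSup {c | ∃ l, cs.IsReduced l ∧ cs.wordProd l = w ∧
    CountFactor (dv n (n+1)) (dv n (n+2)) l = c}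


/-! ### Auxiliary lemmas -/

section AuxFilter

variable {B' : Type*} {M' : CoxeterMatrix B'}

lemma commStep_filter_s14 (p : B' → Bool)
    (hp : ∀ a b : B', M' a b = 2 → ¬(p a = true ∧ p b = true))
    {l l' : List B'} (h : CommStep M' l l') : l.filter p = l'.filter p := by
  obtain ⟨l₁, l₂, a, b, hab, rfl, rfl⟩ := h
  simp only [List.filter_append, List.filter_cons]
  by_cases ha : p a = true <;> by_cases hb : p b = true
  · exact absurd ⟨ha, hb⟩ (hp a b hab)
  · simp [ha, hb]
  · simp [ha, hb]
  · simp [ha, hb]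

lemma commEquiv_filter_s14 (p : B' → Bool)
    (hp : ∀ a b : B', M' a b = 2 → ¬(p a = true ∧ p b = true))
    {l l' : List B'} (h : CommEquiv M' l l') : l.filter p = l'.filter p := by
  induction h with
  | refl => rfl
  | tail _ hstep ih => exact ih.trans (commStep_filter_s14 p hp hstep)

end AuxFilter

section AuxList

variable {α : Type*}

lemma head?_filter_append (p : α → Bool) (l₁ l₂ : List α) (c : α)
    (hc : c ∈ l₁) (hpc : p c = true) (hall : ∀ a ∈ l₁, p a = true → a = c) :
    ((l₁ ++ l₂).filter p).head? = some c := by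
  rw [List.filter_append]
  have hmem : c ∈ l₁.filter p := List.mem_filter.mpr ⟨hc, hpc⟩
  have hne : l₁.filter p ≠ [] := List.ne_nil_of_mem hmem
  obtain ⟨a, as, he⟩ := List.exists_cons_of_ne_nil hne
  have ha : a ∈ l₁.filter p := he ▸ (List.mem_cons_self : a ∈ a :: as)
  have ha' := List.mem_filter.mp ha
  rw [he, List.cons_append]
  simp [hall a ha'.1 ha'.2]

lemma getLast?_filter_append (p : α → Bool) (l₁ l₂ : List α) (c : α)
    (hc : c ∈ l₂) (hpc : p c = true) (hall : ∀ a ∈ l₂, p a = true → a = c) :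
    ((l₁ ++ l₂).filter p).getLast? = some c := by
  rw [List.filter_append]
  have hmem : c ∈ l₂.filter p := List.mem_filter.mpr ⟨hc, hpc⟩
  have hne : l₂.filter p ≠ [] := List.ne_nil_of_mem hmem
  rw [List.getLast?_append_of_ne_nil _ hne]
  have hlast : (l₂.filter p).getLast? = some ((l₂.filter p).getLast hne) :=
    List.getLast?_eq_getLast hne
  have hmem' : (l₂.filter p).getLast hne ∈ l₂.filter p := List.getLast_mem hne
  have h' := List.mem_filter.mp hmem'
  rw [hlast, hall _ h'.1 h'.2]

lemma head?_filter_cons (p : α → Bool) (l : List α) (c : α) (hpc : p c = true) :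
    ((c :: l).filter p).head? = some c := by
  simp [List.filter_cons, hpc]

lemma getLast?_filter_concat (p : α → Bool) (l : List α) (c : α) (hpc : p c = true) :
    ((l ++ [c]).filter p).getLast? = some c := by
  rw [List.filter_append]
  have : [c].filter p = [c] := by simp [hpc]
  rw [this]
  exact List.getLast?_concat

end AuxList

section AuxD

lemma dmat_val (n : ℕ) (a b : Fin (n+3)) :
    DMatrix n a b = if DAdj n a b then 3 else if a = b then 1 else 2 := rfl

lemma dmat_adj {n : ℕ} {a b : Fin (n+3)} (h : DAdj n a b) : DMatrix n a b = 3 := by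
  rw [dmat_val, if_pos h]

lemma dAdj_of_big {n : ℕ} {a b : Fin (n+3)} (h : Big (DMatrix n) a b) :
    DAdj n a b := by
  by_contra hA
  rw [Big, dmat_val, if_neg hA] at h
  rcases h with h | h <;> split_ifs at h <;> omega

/-- Invariance of the `{c,d}`-projection under commutation equivalence, when
`m(c,d) = 3`. -/
lemma proj_invariant {n : ℕ} {c d : Fin (n+3)} (h3 : DMatrix n c d = 3)
    {l l' : List (Fin (n+3))} (h : CommEquiv (DMatrix n) l l') :
    l.filter (fun a => decide (a = c) || decide (a = d)) =
      l'.filter (fun a => decide (a = c) || decide (a = d)) := by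
  apply commEquiv_filter_s14 _ _ h
  rintro a b hab ⟨hpa, hpb⟩
  simp only [Bool.or_eq_true, decide_eq_true_eq] at hpa hpb
  have d1 := (DMatrix n).diagonal c
  have d2 := (DMatrix n).diagonal d
  have hsym := (DMatrix n).symmetric c d
  rcases hpa with rfl | rfl <;> rcases hpb with rfl | rfl <;> omega

/-- Any neighbor of a vertex outside the even core lies in the even core. -/
lemma adj_target {n : ℕ} (hn : 2 ≤ n) (hpar : n % 2 = 0) {a b : Fin (n+3)}
    (h : DAdj n (a : ℕ) (b : ℕ))
    (ha : ¬(2 ≤ (a:ℕ) ∧ (a:ℕ) ≤ n ∧ (a:ℕ) % 2 = 0)) :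
    2 ≤ (b:ℕ) ∧ (b:ℕ) ≤ n ∧ (b:ℕ) % 2 = 0 := by
  unfold DAdj DHalf at h
  omega

/-- Every even-core vertex `t` has a neighbor `r ≠ s` in any candy even layer. -/
lemma exists_nbr {n : ℕ} (hn : 2 ≤ n) (hpar : n % 2 = 0) (t s x y : Fin (n+3))
    (ht : 2 ≤ (t:ℕ) ∧ (t:ℕ) ≤ n ∧ (t:ℕ) % 2 = 0)
    (hx : (x:ℕ) = 0 ∨ (x:ℕ) = 1) (hy : (y:ℕ) = n+1 ∨ (y:ℕ) = n+2) :
    ∃ r : Fin (n+3), (r ∈ OddCore n ∨ r = x ∨ r = y) ∧ DAdj n (r:ℕ) (t:ℕ) ∧ r ≠ s := by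
  obtain ⟨c₁, c₂, h₁, h₂, hcc⟩ :
      ∃ c₁ c₂ : Fin (n+3),
        ((c₁ ∈ OddCore n ∨ c₁ = x ∨ c₁ = y) ∧ DAdj n (c₁:ℕ) (t:ℕ)) ∧
        ((c₂ ∈ OddCore n ∨ c₂ = x ∨ c₂ = y) ∧ DAdj n (c₂:ℕ) (t:ℕ)) ∧
        (c₁:ℕ) ≠ (c₂:ℕ) := by
    by_cases h2 : (t:ℕ) = 2
    · by_cases hn4 : 4 ≤ n
      · refine ⟨x, ⟨3, by omega⟩, ⟨Or.inr (Or.inl rfl), ?_⟩, ⟨Or.inl ?_, ?_⟩, ?_⟩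
        · unfold DAdj DHalf; omega
        · show 3 ≤ (3:ℕ) ∧ (3:ℕ) ≤ n - 1 ∧ (3:ℕ) % 2 = 1
          omega
        · simp only [Fin.val_mk]; unfold DAdj DHalf; omega
        · simp only [Fin.val_mk]; omega
      · refine ⟨x, y, ⟨Or.inr (Or.inl rfl), ?_⟩, ⟨Or.inr (Or.inr rfl), ?_⟩, ?_⟩
        · unfold DAdj DHalf; omega
        · unfold DAdj DHalf; omega
        · omega
    · by_cases hnt : (t:ℕ) = n
      · refine ⟨y, ⟨n-1, by omega⟩, ⟨Or.inr (Or.inr rfl), ?_⟩, ⟨Or.inl ?_, ?_⟩, ?_⟩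
        · unfold DAdj DHalf; omega
        · simp only [OddCore, Set.mem_setOf_eq, Fin.val_mk]; omega
        · simp only [Fin.val_mk]; unfold DAdj DHalf; omega
        · simp only [Fin.val_mk]; omega
      · refine ⟨⟨(t:ℕ)-1, by omega⟩, ⟨(t:ℕ)+1, by omega⟩, ⟨Or.inl ?_, ?_⟩,
          ⟨Or.inl ?_, ?_⟩, ?_⟩
        · simp only [OddCore, Set.mem_setOf_eq, Fin.val_mk]; omega
        · simp only [Fin.val_mk]; unfold DAdj DHalf; omega
        · simp only [OddCore, Set.mem_setOf_eq, Fin.val_mk]; omega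
        · simp only [Fin.val_mk]; unfold DAdj DHalf; omega
        · simp only [Fin.val_mk]; omega
  by_cases hcs : c₁ = s
  · exact ⟨c₂, h₂.1, h₂.2, fun he => hcc (congrArg Fin.val (hcs.trans he.symm))⟩
  · exact ⟨c₁, h₁.1, h₁.2, hcs⟩

end AuxD

theorem stmt14 (n : ℕ) (hn : 2 ≤ n) (hpar : n % 2 = 0) {W : Type*} [Group W]
    (cs : CoxeterSystem (DMatrix n) W) (w : W) (hw : IsFC cs w)
    (hc : IsCandy cs w) :
    StarIrreducible cs w := by
  obtain ⟨us, m, x, y, hcf, hlen, hm2, hmpar, hEv, hxy, hOd⟩ := hc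
  obtain ⟨husnil, hprod, hred, hlcomm, hdesc, hchain⟩ := hcf
  intro s t
  constructor
  · -- no left star reduction
    rintro ⟨hbig, hds, hdt⟩
    have hadj : DAdj n (s:ℕ) (t:ℕ) := dAdj_of_big hbig
    have hst : (s:ℕ) ≠ (t:ℕ) := dAdj_ne n _ _ hadj
    -- build a reduced word s :: t :: lv for w
    have hlw : cs.length (cs.simple s * w) + 1 = cs.length w := cs.isLeftDescent_iff.mp hds
    have hlw2 : cs.length (cs.simple t * (cs.simple s * w)) + 1
        = cs.length (cs.simple s * w) := cs.isLeftDescent_iff.mp hdt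
    obtain ⟨lv, hlvred, hlveq⟩ := cs.exists_reduced_word' (cs.simple t * (cs.simple s * w))
    have hlprod : cs.wordProd (s :: t :: lv) = w := by
      rw [wordProd_cons, wordProd_cons, ← hlveq, simple_mul_simple_cancel_left,
        simple_mul_simple_cancel_left]
    have hlred : cs.IsReduced (s :: t :: lv) := by
      have hlv : cs.length (cs.simple t * (cs.simple s * w)) = lv.length := by
        rw [hlveq]; exact hlvred
      show cs.length (cs.wordProd (s :: t :: lv)) = (s :: t :: lv).length
      rw [hlprod]
      simp only [List.length_cons]
      omega
    -- decompose the CFNF word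
    have husne : us ≠ [] := by
      intro h; rw [h] at hlen; simp at hlen
    obtain ⟨u0, T, rfl⟩ := List.exists_cons_of_ne_nil husne
    obtain ⟨hx0, hy0, hset0⟩ := hEv 0 (by omega)
    have hmem0 : ∀ a : Fin (n+3), a ∈ u0 ↔ (a ∈ OddCore n ∨ a = x 0 ∨ a = y 0) := by
      intro a
      have h := Set.ext_iff.mp hset0 a
      simp only [Set.mem_setOf_eq, Set.mem_union, Set.mem_insert_iff,
        Set.mem_singleton_iff] at h
      simpa using h
    have hflat : (u0 :: T).flatten = u0 ++ T.flatten := List.flatten_cons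
    have hequiv := hw (u0 :: T).flatten (s :: t :: lv) hred hlred hprod hlprod
    by_cases hsE : 2 ≤ (s:ℕ) ∧ (s:ℕ) ≤ n ∧ (s:ℕ) % 2 = 0
    · -- s is in the even core: a neighbor of s lies in the head layer
      obtain ⟨r, hrmem, hradj, hrs⟩ := exists_nbr hn hpar s s (x 0) (y 0) hsE hx0 hy0
      have h3 : DMatrix n r s = 3 := dmat_adj hradj
      have hproj := proj_invariant h3 hequiv
      have hsnot : s ∉ u0 := by
        intro hs
        rcases (hmem0 s).mp hs with h | h | h
        · simp only [OddCore, Set.mem_setOf_eq] at h; omega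
        · have := congrArg Fin.val h; omega
        · have := congrArg Fin.val h; omega
      have h1 : (((u0 :: T).flatten).filter
          (fun a => decide (a = r) || decide (a = s))).head? = some r := by
        rw [hflat]
        apply head?_filter_append _ _ _ r ((hmem0 r).mpr hrmem) (by simp)
        intro a ha hpa
        simp only [Bool.or_eq_true, decide_eq_true_eq] at hpa
        rcases hpa with rfl | rfl
        · rfl
        · exact absurd ha hsnot
      have h2 : (((s :: t :: lv)).filter
          (fun a => decide (a = r) || decide (a = s))).head? = some s :=
        head?_filter_cons _ _ s (by simp)
      rw [hproj, h2] at h1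
      exact hrs (Option.some_injective _ h1.symm)
    · -- s is not in the even core, so t is; pick r ≠ s in the head layer adjacent to t
      have htE : 2 ≤ (t:ℕ) ∧ (t:ℕ) ≤ n ∧ (t:ℕ) % 2 = 0 := adj_target hn hpar hadj hsE
      obtain ⟨r, hrmem, hradj, hrs⟩ := exists_nbr hn hpar t s (x 0) (y 0) htE hx0 hy0
      have hrt : (r:ℕ) ≠ (t:ℕ) := dAdj_ne n _ _ hradj
      have h3 : DMatrix n r t = 3 := dmat_adj hradj
      have hproj := proj_invariant h3 hequiv
      have htnot : t ∉ u0 := by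
        intro hti
        rcases (hmem0 t).mp hti with h | h | h
        · simp only [OddCore, Set.mem_setOf_eq] at h; omega
        · have := congrArg Fin.val h; omega
        · have := congrArg Fin.val h; omega
      have h1 : (((u0 :: T).flatten).filter
          (fun a => decide (a = r) || decide (a = t))).head? = some r := by
        rw [hflat]
        apply head?_filter_append _ _ _ r ((hmem0 r).mpr hrmem) (by simp)
        intro a ha hpa
        simp only [Bool.or_eq_true, decide_eq_true_eq] at hpa
        rcases hpa with rfl | rfl
        · rfl
        · exact absurd ha htnot
      have h2 : (((s :: t :: lv)).filter
          (fun a => decide (a = r) || decide (a = t))).head? = some t := by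
        have hps : (fun a => decide (a = r) || decide (a = t)) s = false := by
          simp only [Bool.or_eq_false_iff, decide_eq_false_iff_not]
          exact ⟨fun h => hrs (by rw [h]), fun h => hst (congrArg Fin.val h)⟩
        have hsr : ¬ (s = r) := fun h => hrs h.symm
        have hst' : ¬ (s = t) := fun h => hst (congrArg Fin.val h)
        have hstep : (s :: t :: lv).filter
            (fun a => decide (a = r) || decide (a = t))
            = t :: lv.filter (fun a => decide (a = r) || decide (a = t)) := by
          simp [List.filter_cons, hsr, hst']
        rw [hstep]
        rfl
      rw [hproj, h2] at h1
      exact hrt (congrArg Fin.val (Option.some_injective _ h1).symm)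
  · -- no right star reduction
    rintro ⟨hbig, hds, hdt⟩
    have hadj : DAdj n (s:ℕ) (t:ℕ) := dAdj_of_big hbig
    have hst : (s:ℕ) ≠ (t:ℕ) := dAdj_ne n _ _ hadj
    -- build a reduced word lv ++ [t, s] for w
    have hlw : cs.length (w * cs.simple s) + 1 = cs.length w := cs.isRightDescent_iff.mp hds
    have hlw2 : cs.length (w * cs.simple s * cs.simple t) + 1
        = cs.length (w * cs.simple s) := cs.isRightDescent_iff.mp hdt
    obtain ⟨lv, hlvred, hlveq⟩ := cs.exists_reduced_word' (w * cs.simple s * cs.simple t)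
    have hlprod : cs.wordProd (lv ++ [t, s]) = w := by
      have hts : cs.wordProd [t, s] = cs.simple t * cs.simple s := by
        rw [wordProd_cons, wordProd_cons, wordProd_nil, mul_one]
      rw [wordProd_append, ← hlveq, hts, ← mul_assoc,
        simple_mul_simple_cancel_right, simple_mul_simple_cancel_right]
    have hlred : cs.IsReduced (lv ++ [t, s]) := by
      have hlv : cs.length (w * cs.simple s * cs.simple t) = lv.length := by
        rw [hlveq]; exact hlvred
      show cs.length (cs.wordProd (lv ++ [t, s])) = (lv ++ [t, s]).length
      rw [hlprod]
      simp only [List.length_append, List.length_cons, List.length_nil]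
      omega
    -- decompose the CFNF word from the right
    have husne : us ≠ [] := by
      intro h; rw [h] at hlen; simp at hlen
    obtain ⟨I, uL, hus⟩ : ∃ I uL, us = I ++ [uL] :=
      ⟨us.dropLast, us.getLast husne, (List.dropLast_append_getLast husne).symm⟩
    have hIlen : I.length = m := by
      have := hlen
      rw [hus, List.length_append, List.length_cons, List.length_nil] at this
      omega
    have hgetm : us.getD m [] = uL := by
      rw [hus, List.getD_append_right _ _ _ _ (by omega), hIlen]
      simp
    obtain ⟨hxM, hyM, hsetM⟩ := hEv (m / 2) (by omega)
    rw [show 2 * (m / 2) = m by omega, hgetm] at hsetM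
    have hmemM : ∀ a : Fin (n+3), a ∈ uL ↔
        (a ∈ OddCore n ∨ a = x (m/2) ∨ a = y (m/2)) := by
      intro a
      have h := Set.ext_iff.mp hsetM a
      simp only [Set.mem_setOf_eq, Set.mem_union, Set.mem_insert_iff,
        Set.mem_singleton_iff] at h
      simpa using h
    have hflat : us.flatten = I.flatten ++ uL := by
      rw [hus, List.flatten_append, List.flatten_cons, List.flatten_nil, List.append_nil]
    have hequiv := hw us.flatten (lv ++ [t, s]) hred hlred hprod hlprod
    by_cases hsE : 2 ≤ (s:ℕ) ∧ (s:ℕ) ≤ n ∧ (s:ℕ) % 2 = 0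
    · -- s in the even core: a neighbor of s lies in the last layer
      obtain ⟨r, hrmem, hradj, hrs⟩ :=
        exists_nbr hn hpar s s (x (m/2)) (y (m/2)) hsE hxM hyM
      have h3 : DMatrix n r s = 3 := dmat_adj hradj
      have hproj := proj_invariant h3 hequiv
      have hsnot : s ∉ uL := by
        intro hs
        rcases (hmemM s).mp hs with h | h | h
        · simp only [OddCore, Set.mem_setOf_eq] at h; omega
        · have := congrArg Fin.val h; omega
        · have := congrArg Fin.val h; omega
      have h1 : ((us.flatten).filter
          (fun a => decide (a = r) || decide (a = s))).getLast? = some r := by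
        rw [hflat]
        apply getLast?_filter_append _ _ _ r ((hmemM r).mpr hrmem) (by simp)
        intro a ha hpa
        simp only [Bool.or_eq_true, decide_eq_true_eq] at hpa
        rcases hpa with rfl | rfl
        · rfl
        · exact absurd ha hsnot
      have h2 : ((lv ++ [t, s]).filter
          (fun a => decide (a = r) || decide (a = s))).getLast? = some s := by
        have : lv ++ [t, s] = (lv ++ [t]) ++ [s] := by simp
        rw [this]
        exact getLast?_filter_concat _ _ s (by simp)
      rw [hproj, h2] at h1
      exact hrs (Option.some_injective _ h1.symm)
    · -- t in the even core: pick r ≠ s in the last layer adjacent to t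
      have htE : 2 ≤ (t:ℕ) ∧ (t:ℕ) ≤ n ∧ (t:ℕ) % 2 = 0 := adj_target hn hpar hadj hsE
      obtain ⟨r, hrmem, hradj, hrs⟩ :=
        exists_nbr hn hpar t s (x (m/2)) (y (m/2)) htE hxM hyM
      have hrt : (r:ℕ) ≠ (t:ℕ) := dAdj_ne n _ _ hradj
      have h3 : DMatrix n r t = 3 := dmat_adj hradj
      have hproj := proj_invariant h3 hequiv
      have htnot : t ∉ uL := by
        intro hti
        rcases (hmemM t).mp hti with h | h | h
        · simp only [OddCore, Set.mem_setOf_eq] at h; omega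
        · have := congrArg Fin.val h; omega
        · have := congrArg Fin.val h; omega
      have h1 : ((us.flatten).filter
          (fun a => decide (a = r) || decide (a = t))).getLast? = some r := by
        rw [hflat]
        apply getLast?_filter_append _ _ _ r ((hmemM r).mpr hrmem) (by simp)
        intro a ha hpa
        simp only [Bool.or_eq_true, decide_eq_true_eq] at hpa
        rcases hpa with rfl | rfl
        · rfl
        · exact absurd ha htnot
      have h2 : ((lv ++ [t, s]).filter
          (fun a => decide (a = r) || decide (a = t))).getLast? = some t := by
        have hsr : ¬ (s = r) := fun h => hrs h.symm
        have hst' : ¬ (s = t) := fun h => hst (congrArg Fin.val h)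
        have htr : ¬ (t = r) := fun h => hrt (congrArg Fin.val h).symm
        have hstep : (lv ++ [t, s]).filter
            (fun a => decide (a = r) || decide (a = t))
            = lv.filter (fun a => decide (a = r) || decide (a = t)) ++ [t] := by
          rw [List.filter_append]
          congr 1
          simp [List.filter_cons, hsr, hst', htr]
        rw [hstep]
        exact List.getLast?_concat
      rw [hproj, h2] at h1
      exact hrt (congrArg Fin.val (Option.some_injective _ h1).symm)


end CoxFC
end
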